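/- arXiv:2212.03026 — 9 statements merged into one kernel-verified Lean document; each statement's English description precedes it below -/
import Mathlib

section
/- Let G = Circ(n, S) with n ≥ 2 and S ⊆ {1, …, ⌊n/2⌋} nonempty. Then G is a nut graph if and only if all of the following hold: (i) n is even; (ii) S consists of exactly t odd and t even integers from {1, 2, …, n/2 − 1} for some t ≥ 1; and (iii) P(ω^j) ≠ 0 for each j ∈ {1, 2, …, n/2 − 1}, where ω = e^{2πi/n} and P(x) = Σ_{s ∈ S} (x^s + x^{n−s}). -/
open Classical in
/-- The adjacency matrix of a simple graph over `ℚ`. -/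
noncomputable def adjMatrixQ {V : Type*} [Fintype V] (G : SimpleGraph V) : Matrix V V ℚ :=
  Matrix.of fun i j => if G.Adj i j then 1 else 0

/-- A nut graph: a simple graph on at least one vertex whose rational adjacency matrix has
nullity one, and some vector in its kernel has all entries nonzero. -/
def IsNutGraph {V : Type*} [Fintype V] (G : SimpleGraph V) : Prop :=
  Nonempty V ∧
    Module.finrank ℚ (LinearMap.ker (adjMatrixQ G).mulVecLin) = 1 ∧
    ∃ v : V → ℚ, (adjMatrixQ G).mulVec v = 0 ∧ ∀ i, v i ≠ 0

/-- The circulant graph `Circ(n, S)`: vertices `ZMod n`, distinct `i, j` adjacent iff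
`(i - j) mod n` or `(j - i) mod n` belongs to `S`. -/
def circulantGraph (n : ℕ) (S : Finset ℕ) : SimpleGraph (ZMod n) where
  Adj i j := i ≠ j ∧ ((i - j).val ∈ S ∨ (j - i).val ∈ S)
  symm := ⟨fun _ _ h => ⟨h.1.symm, h.2.symm⟩⟩
  loopless := ⟨fun _ h => h.1 rfl⟩

/-!
The adjacency matrix of `Circ(n, S)` is the circulant matrix of the indicator `c` of `±S`, so the
discrete Fourier transform diagonalises it over `ℂ`, with eigenvalues `λ k = ĉ k`. The rank of a
rational matrix does not change over `ℂ`, hence the rational nullity is the number of zeros of `λ`.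
Since `λ (-k) = λ k` and `λ 0 = |±S| > 0`, a unique zero must sit at `k = n/2` with `n` even; the
kernel is then spanned by the alternating vector `((-1) ^ i)`, which has no zero entry. Finally
`λ (n/2) = ∑_{m ∈ ±S} (-1) ^ m` vanishes iff `n/2 ∉ S` and `S` has as many odd as even elements,
and when `n/2 ∉ S` the other eigenvalues are `λ j = P(ω ^ j)`.
-/

open Matrix Finset
open scoped ZMod

namespace Matrix

variable {m : Type*} [Fintype m] [DecidableEq m]

theorem rank_fromBlocks_one_zero {R : Type*} [Field R] (r k : ℕ) :
    (fromBlocks (1 : Matrix (Fin r) (Fin r) R) 0 0 (0 : Matrix (Fin k) (Fin k) R)).rank = r := by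
  classical
  rw [← diagonal_one, ← diagonal_zero, fromBlocks_diagonal, rank_diagonal]
  simp [Fintype.card_subtype, Finset.card_filter, Fintype.sum_sum_type]

theorem rank_map_ringHom {K L : Type*} [Field K] [Field L] (f : K →+* L) (M : Matrix m m K) :
    (M.map f).rank = M.rank := by
  obtain ⟨V, U, e, hV, hU, h⟩ := M.exists_rank_normal_form
  have hmap : V.map f * M.map f * U.map f = (fromBlocks 1 0 0 0).submatrix e e := by
    rw [← Matrix.map_mul, ← Matrix.map_mul, h, ← submatrix_map, fromBlocks_map]
    simp
  have isUnit_det_map {A : Matrix m m K} (hA : IsUnit A) : IsUnit (A.map f).det := by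
    rw [← f.mapMatrix_apply, ← f.map_det]
    exact ((isUnit_iff_isUnit_det A).1 hA).map f
  rw [← rank_mul_eq_right_of_isUnit_det _ _ (isUnit_det_map hV),
    ← rank_mul_eq_left_of_isUnit_det _ _ (isUnit_det_map hU), hmap, rank_submatrix,
    rank_fromBlocks_one_zero]

end Matrix

namespace ZMod

variable {N : ℕ}

lemma neg_natCast_half (hN : Even N) : -((N / 2 : ℕ) : ZMod N) = (N / 2 : ℕ) := by
  rw [neg_eq_iff_add_eq_zero, ← Nat.cast_add, ← two_mul, Nat.two_mul_div_two_of_even hN,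
    natCast_self]

lemma eq_natCast_half_of_neg_eq [NeZero N] {k : ZMod N} (hk : k ≠ 0) (h : -k = k) :
    Even N ∧ k = (N / 2 : ℕ) := by
  have hval := congrArg val h
  rw [neg_val, if_neg hk] at hval
  have hlt := val_lt k
  refine ⟨⟨k.val, by omega⟩, ?_⟩
  rw [show N / 2 = k.val by omega, natCast_zmod_val]

lemma exists_le_half_eq_or_neg_eq [NeZero N] (k : ZMod N) :
    ∃ j : ℕ, j ≤ N / 2 ∧ (k = j ∨ -k = j) := by
  by_cases hk : k.val ≤ N / 2
  · exact ⟨k.val, hk, Or.inl (natCast_zmod_val k).symm⟩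
  · have hk0 : k ≠ 0 := by rintro rfl; simp at hk
    refine ⟨(-k).val, ?_, Or.inr (natCast_zmod_val _).symm⟩
    rw [neg_val, if_neg hk0]
    omega

section NegOnePow

variable {R : Type*} [Monoid R] [HasDistribNeg R] [NeZero N]

lemma neg_one_pow_val_add (hN : Even N) (a b : ZMod N) :
    (-1 : R) ^ (a + b).val = (-1) ^ a.val * (-1) ^ b.val := by
  rw [val_add, ← pow_add]
  conv_rhs => rw [← Nat.div_add_mod (a.val + b.val) N, pow_add, pow_mul, hN.neg_one_pow, one_pow,
    one_mul]

lemma neg_one_pow_val_neg (hN : Even N) (a : ZMod N) : (-1 : R) ^ (-a).val = (-1) ^ a.val := by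
  have h := neg_one_pow_val_add (R := R) hN a (-a)
  rw [add_neg_cancel, val_zero, pow_zero] at h
  have hsq : (-1 : R) ^ a.val * (-1) ^ a.val = 1 := by
    rw [← pow_add, ← two_mul, pow_mul, neg_one_sq, one_pow]
  calc (-1 : R) ^ (-a).val = (-1) ^ a.val * (-1) ^ a.val * (-1) ^ (-a).val := by rw [hsq, one_mul]
    _ = (-1) ^ a.val := by rw [mul_assoc, ← h, mul_one]

end NegOnePow

lemma stdAddChar_natCast [NeZero N] (k : ℕ) :
    stdAddChar (k : ZMod N) = Complex.exp (2 * Real.pi * Complex.I / N) ^ k := by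
  rw [← Int.cast_natCast, stdAddChar_coe, ← Complex.exp_nat_mul]
  congr 1
  push_cast
  ring

lemma stdAddChar_mul_natCast_half [NeZero N] (hN : Even N) (a : ZMod N) :
    stdAddChar (a * ((N / 2 : ℕ) : ZMod N)) = (-1) ^ a.val := by
  have hω : Complex.exp (2 * Real.pi * Complex.I / N) ^ (N / 2) = -1 := by
    rw [← Complex.exp_nat_mul, ← Complex.exp_pi_mul_I]
    congr 1
    have hN0 : (N : ℂ) ≠ 0 := Nat.cast_ne_zero.2 (NeZero.ne N)
    field_simp
    exact_mod_cast Nat.div_two_mul_two_of_even hN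
  conv_lhs => rw [← natCast_zmod_val a]
  rw [← Nat.cast_mul, stdAddChar_natCast, pow_mul', hω]

lemma dft_apply_natCast_half [NeZero N] (hN : Even N) (c : ZMod N → ℂ) :
    𝓕 c (N / 2 : ℕ) = ∑ m, c m * (-1) ^ m.val := by
  refine sum_congr rfl fun m _ => ?_
  rw [← mul_neg, neg_natCast_half hN, stdAddChar_mul_natCast_half hN, smul_eq_mul, mul_comm]

lemma circulant_mulVec_neg_one_pow {R : Type*} [CommRing R] [NeZero N] (hN : Even N)
    (c : ZMod N → R) :
    circulant c *ᵥ (fun i => (-1) ^ i.val) = (∑ m, c m * (-1) ^ m.val) • fun i => (-1) ^ i.val := by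
  ext i
  simp only [mulVec, dotProduct, circulant_apply, Pi.smul_apply, smul_eq_mul, sum_mul]
  rw [← Equiv.sum_comp (Equiv.subLeft i)]
  refine sum_congr rfl fun m _ => ?_
  rw [Equiv.subLeft_apply, sub_sub_cancel, sub_eq_add_neg, neg_one_pow_val_add hN,
    neg_one_pow_val_neg hN]
  ring

lemma dft_circulant_mulVec [NeZero N] (c x : ZMod N → ℂ) : 𝓕 (circulant c *ᵥ x) = 𝓕 c * 𝓕 x := by
  ext k
  simp only [dft_apply, smul_eq_mul, Pi.mul_apply, mulVec, dotProduct, circulant_apply, mul_sum,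
    sum_mul]
  rw [sum_comm]
  refine sum_congr rfl fun j _ => ?_
  rw [← Equiv.sum_comp (Equiv.addRight j)]
  refine sum_congr rfl fun m _ => ?_
  simp only [Equiv.coe_addRight, add_sub_cancel_right, add_mul, neg_add, AddChar.map_add_eq_mul]
  ring

lemma rank_circulant [NeZero N] (c : ZMod N → ℂ) [DecidableEq ℂ] :
    (circulant c).rank = Fintype.card {k // 𝓕 c k ≠ 0} := by
  have hconj : (dft : (ZMod N → ℂ) ≃ₗ[ℂ] _).toLinearMap ∘ₗ (circulant c).mulVecLin =
      (diagonal (𝓕 c)).mulVecLin ∘ₗ dft.toLinearMap := by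
    refine LinearMap.ext fun x => ?_
    ext k
    simp [dft_circulant_mulVec, mulVec_diagonal]
  rw [← rank_diagonal, rank, rank, ← LinearEquiv.finrank_map_eq dft, ← LinearMap.range_comp,
    hconj, LinearMap.range_comp_of_range_eq_top _ (LinearEquiv.range _)]

lemma finrank_ker_circulant [NeZero N] (c : ZMod N → ℚ) :
    Module.finrank ℚ (LinearMap.ker (circulant c).mulVecLin) =
      Fintype.card {k // 𝓕 (fun m => (c m : ℂ)) k = 0} := by
  classical
  have hrank : (circulant c).rank = Fintype.card {k // 𝓕 (fun m => (c m : ℂ)) k ≠ 0} := by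
    rw [← rank_circulant, ← rank_map_ringHom (Rat.castHom ℂ), map_circulant]
    rfl
  have hsplit : Fintype.card {k // 𝓕 (fun m => (c m : ℂ)) k = 0} +
      Fintype.card {k // 𝓕 (fun m => (c m : ℂ)) k ≠ 0} = N := by
    rw [Fintype.card_subtype_compl, Nat.add_sub_of_le (Fintype.card_subtype_le _), ZMod.card]
  have hrn := LinearMap.finrank_range_add_finrank_ker (circulant c).mulVecLin
  rw [Module.finrank_fintype_fun_eq_card, ZMod.card, ← rank, hrank] at hrn
  omega

end ZMod

lemma Finset.sum_neg_one_pow {R : Type*} [Ring R] (S : Finset ℕ) :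
    ∑ s ∈ S, (-1 : R) ^ s = #{s ∈ S | s % 2 = 0} - #{s ∈ S | s % 2 = 1} := by
  rw [← sum_filter_add_sum_filter_not S (fun s => s % 2 = 0)]
  have hodd : {s ∈ S | ¬s % 2 = 0} = {s ∈ S | s % 2 = 1} := filter_congr fun s _ => by omega
  rw [hodd, sum_congr rfl fun s hs => Even.neg_one_pow (Nat.even_iff.2 (mem_filter.1 hs).2),
    sum_congr rfl fun s hs => Odd.neg_one_pow (Nat.odd_iff.2 (mem_filter.1 hs).2)]
  simp [sub_eq_add_neg]

namespace circulantGraph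

variable {n : ℕ} {S : Finset ℕ}

def symbol (n : ℕ) (S : Finset ℕ) (m : ZMod n) : ℚ :=
  if m.val ∈ S ∨ (-m).val ∈ S then 1 else 0

def connectionSet (n : ℕ) (S : Finset ℕ) : Finset (ZMod n) :=
  S.image Nat.cast ∪ S.image (fun s : ℕ => -(s : ZMod n))

noncomputable def eigenvalue (n : ℕ) [NeZero n] (S : Finset ℕ) : ZMod n → ℂ :=
  𝓕 fun m => (symbol n S m : ℂ)

lemma adjMatrixQ_eq_circulant [NeZero n] (h0 : 0 ∉ S) :
    adjMatrixQ (circulantGraph n S) = circulant (symbol n S) := by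
  ext i j
  by_cases hij : i = j
  · simp [adjMatrixQ, circulantGraph, symbol, hij, h0]
  · simp [adjMatrixQ, circulantGraph, symbol, hij, neg_sub]

lemma symbol_neg (m : ZMod n) : symbol n S (-m) = symbol n S m := by
  simp only [symbol, neg_neg, or_comm]

lemma symbol_nonneg (m : ZMod n) : 0 ≤ symbol n S m := by
  unfold symbol; split_ifs <;> norm_num

lemma lt_of_mem (hS : S ⊆ Icc 1 (n / 2)) {s : ℕ} (hs : s ∈ S) : s < n := by
  have := mem_Icc.1 (hS hs)
  omega

lemma natCast_injOn (hS : S ⊆ Icc 1 (n / 2)) : Set.InjOn (Nat.cast : ℕ → ZMod n) S := by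
  intro a ha b hb h
  simpa [ZMod.val_natCast_of_lt (lt_of_mem hS ha), ZMod.val_natCast_of_lt (lt_of_mem hS hb)] using
    congrArg ZMod.val h

lemma filter_two_mul_eq_eq_empty (hhalf : n / 2 ∉ S) : {s ∈ S | 2 * s = n} = ∅ :=
  filter_false_of_mem fun s hs h2s => hhalf (by rwa [← show s = n / 2 by omega])

lemma mem_connectionSet_iff [NeZero n] (hS : S ⊆ Icc 1 (n / 2)) (m : ZMod n) :
    m ∈ connectionSet n S ↔ m.val ∈ S ∨ (-m).val ∈ S := by
  simp only [connectionSet, mem_union, mem_image]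
  constructor
  · rintro (⟨s, hs, rfl⟩ | ⟨s, hs, rfl⟩)
    · exact Or.inl (by rwa [ZMod.val_natCast_of_lt (lt_of_mem hS hs)])
    · exact Or.inr (by rwa [neg_neg, ZMod.val_natCast_of_lt (lt_of_mem hS hs)])
  · rintro (h | h)
    · exact Or.inl ⟨m.val, h, ZMod.natCast_zmod_val m⟩
    · exact Or.inr ⟨(-m).val, h, by rw [ZMod.natCast_zmod_val, neg_neg]⟩

lemma image_natCast_inter_image_neg (hS : S ⊆ Icc 1 (n / 2)) :
    S.image Nat.cast ∩ S.image (fun s : ℕ => -(s : ZMod n)) =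
      {s ∈ S | 2 * s = n}.image Nat.cast := by
  ext m
  simp only [mem_inter, mem_image, mem_filter]
  constructor
  · rintro ⟨⟨s, hs, rfl⟩, ⟨s', hs', hss'⟩⟩
    have hdvd : n ∣ s + s' := by
      rw [← ZMod.natCast_eq_zero_iff (s + s'), Nat.cast_add, ← neg_eq_iff_add_eq_zero, ← hss',
        neg_neg]
    have := mem_Icc.1 (hS hs)
    have := mem_Icc.1 (hS hs')
    have := Nat.le_of_dvd (by omega) hdvd
    exact ⟨s, ⟨hs, by omega⟩, rfl⟩
  · rintro ⟨s, ⟨hs, h2s⟩, rfl⟩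
    refine ⟨⟨s, hs, rfl⟩, s, hs, ?_⟩
    rw [neg_eq_iff_add_eq_zero, ← Nat.cast_add, ← two_mul, h2s, ZMod.natCast_self]

/-- An element `s = n / 2` of `S` is its own negative, so the right-hand side counts it twice. -/
lemma sum_symbol_smul [NeZero n] {M : Type*} [AddCommMonoid M] [Module ℚ M]
    (hS : S ⊆ Icc 1 (n / 2)) (f : ZMod n → M) :
    ∑ m, symbol n S m • f m + ∑ s ∈ S with 2 * s = n, f s = ∑ s ∈ S, (f s + f (-s)) := by
  have hsupp : ∑ m, symbol n S m • f m = ∑ m ∈ connectionSet n S, f m := by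
    rw [← filter_univ_mem (connectionSet n S), sum_filter]
    refine sum_congr rfl fun m _ => ?_
    simp only [symbol, mem_connectionSet_iff hS, ite_smul, one_smul, zero_smul]
  have hinj := natCast_injOn (n := n) hS
  rw [hsupp, ← sum_image (hinj.mono (filter_subset _ S)), ← image_natCast_inter_image_neg hS,
    connectionSet, sum_union_inter, sum_add_distrib, sum_image hinj,
    sum_image fun a ha b hb h => hinj ha hb (neg_inj.1 h)]

lemma sum_symbol_mul_neg_one_pow_add [NeZero n] (hS : S ⊆ Icc 1 (n / 2)) (hn : Even n) :
    ∑ m, symbol n S m * (-1 : ℚ) ^ m.val + ∑ s ∈ S with 2 * s = n, (-1 : ℚ) ^ s =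
      2 * (#{s ∈ S | s % 2 = 0} - #{s ∈ S | s % 2 = 1}) := by
  have hsum := sum_symbol_smul hS fun m => (-1 : ℚ) ^ m.val
  have hval : ∀ s ∈ S, (s : ZMod n).val = s := fun s hs => ZMod.val_natCast_of_lt (lt_of_mem hS hs)
  simp only [smul_eq_mul, ZMod.neg_one_pow_val_neg hn] at hsum
  have hself : ∑ s ∈ S with 2 * s = n, (-1 : ℚ) ^ (s : ZMod n).val =
      ∑ s ∈ S with 2 * s = n, (-1 : ℚ) ^ s :=
    sum_congr rfl fun s hs => by rw [hval s (mem_filter.1 hs).1]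
  have hpair : ∑ s ∈ S, ((-1 : ℚ) ^ (s : ZMod n).val + (-1) ^ (s : ZMod n).val) =
      2 * ∑ s ∈ S, (-1 : ℚ) ^ s := by
    rw [mul_sum]
    exact sum_congr rfl fun s hs => by rw [hval s hs, two_mul]
  rwa [hself, hpair, sum_neg_one_pow S] at hsum

lemma sum_symbol_mul_neg_one_pow_eq_zero_iff [NeZero n] (hS : S ⊆ Icc 1 (n / 2)) (hn : Even n) :
    ∑ m, symbol n S m * (-1 : ℚ) ^ m.val = 0 ↔
      n / 2 ∉ S ∧ #{s ∈ S | s % 2 = 1} = #{s ∈ S | s % 2 = 0} := by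
  have hsum := sum_symbol_mul_neg_one_pow_add hS hn
  by_cases hhalf : n / 2 ∈ S
  · have hfilter : {s ∈ S | 2 * s = n} = {n / 2} := by
      ext s
      simp only [mem_filter, mem_singleton]
      exact ⟨fun h => by omega, fun h => ⟨h ▸ hhalf, h ▸ Nat.two_mul_div_two_of_even hn⟩⟩
    simp only [hhalf, not_true_eq_false, false_and, iff_false]
    intro hzero
    rw [hfilter, sum_singleton, hzero, zero_add] at hsum
    rcases neg_one_pow_eq_or ℚ (n / 2) with h | h <;> rw [h] at hsum
    · have : (2 * ((#{s ∈ S | s % 2 = 0} : ℤ) - #{s ∈ S | s % 2 = 1}) : ℤ) = 1 := by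
        exact_mod_cast hsum.symm
      omega
    · have : (2 * ((#{s ∈ S | s % 2 = 0} : ℤ) - #{s ∈ S | s % 2 = 1}) : ℤ) = -1 := by
        exact_mod_cast hsum.symm
      omega
  · rw [filter_two_mul_eq_eq_empty hhalf, sum_empty, add_zero] at hsum
    rw [hsum, mul_eq_zero, sub_eq_zero, Nat.cast_inj]
    simp [hhalf, eq_comm]

lemma exists_card_odd_eq_card_even_iff (hS : S ⊆ Icc 1 (n / 2)) (hSne : S.Nonempty) :
    (∃ t : ℕ, 1 ≤ t ∧ (∀ s ∈ S, 1 ≤ s ∧ s ≤ n / 2 - 1) ∧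
        #{s ∈ S | s % 2 = 1} = t ∧ #{s ∈ S | s % 2 = 0} = t) ↔
      n / 2 ∉ S ∧ #{s ∈ S | s % 2 = 1} = #{s ∈ S | s % 2 = 0} := by
  constructor
  · rintro ⟨t, -, hbound, hodd, heven⟩
    refine ⟨fun h => ?_, hodd.trans heven.symm⟩
    have := hbound _ h
    omega
  · rintro ⟨hhalf, hcard⟩
    obtain ⟨s₀, hs₀⟩ := hSne
    have hpos : 1 ≤ #{s ∈ S | s % 2 = 1} := by
      rcases Nat.mod_two_eq_zero_or_one s₀ with h | h
      · exact hcard ▸ card_pos.2 ⟨s₀, mem_filter.2 ⟨hs₀, h⟩⟩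
      · exact card_pos.2 ⟨s₀, mem_filter.2 ⟨hs₀, h⟩⟩
    refine ⟨_, hpos, fun s hs => ?_, rfl, hcard.symm⟩
    have := mem_Icc.1 (hS hs)
    have : s ≠ n / 2 := ne_of_mem_of_not_mem hs hhalf
    omega

lemma eigenvalue_neg [NeZero n] (k : ZMod n) : eigenvalue n S (-k) = eigenvalue n S k := by
  have := congrFun (ZMod.dft_comp_neg fun m => (symbol n S m : ℂ)) k
  simp only [symbol_neg] at this
  exact this.symm

lemma eigenvalue_zero_ne_zero [NeZero n] (hS : S ⊆ Icc 1 (n / 2)) (hSne : S.Nonempty) :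
    eigenvalue n S 0 ≠ 0 := by
  obtain ⟨s, hs⟩ := hSne
  have hs1 : symbol n S s = 1 := by
    rw [symbol, if_pos (Or.inl (by rwa [ZMod.val_natCast_of_lt (lt_of_mem hS hs)]))]
  have hpos : 0 < ∑ m, symbol n S m :=
    one_pos.trans_le (hs1 ▸ single_le_sum (fun m _ => symbol_nonneg m) (mem_univ _))
  rw [eigenvalue, ZMod.dft_apply_zero]
  exact_mod_cast hpos.ne'

lemma eigenvalue_natCast_half [NeZero n] (hn : Even n) :
    eigenvalue n S (n / 2 : ℕ) = ((∑ m, symbol n S m * (-1) ^ m.val : ℚ) : ℂ) := by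
  rw [eigenvalue, ZMod.dft_apply_natCast_half hn]
  push_cast
  rfl

lemma eigenvalue_natCast [NeZero n] (hS : S ⊆ Icc 1 (n / 2)) (hhalf : n / 2 ∉ S) (j : ℕ) :
    eigenvalue n S j =
      ∑ s ∈ S, ((Complex.exp (2 * (Real.pi : ℂ) * Complex.I / (n : ℂ))) ^ (j * s) +
        (Complex.exp (2 * (Real.pi : ℂ) * Complex.I / (n : ℂ))) ^ (j * (n - s))) := by
  have hsum := sum_symbol_smul hS fun m => ZMod.stdAddChar (-(m * (j : ZMod n)))
  rw [filter_two_mul_eq_eq_empty hhalf, sum_empty, add_zero] at hsum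
  rw [eigenvalue, ZMod.dft_apply]
  simp only [smul_eq_mul, Rat.smul_def, mul_comm (ZMod.stdAddChar _)] at hsum ⊢
  rw [hsum]
  refine sum_congr rfl fun s hs => ?_
  have e1 : -((s : ZMod n) * j) = ((j * (n - s) : ℕ) : ZMod n) := by
    rw [Nat.cast_mul, Nat.cast_sub (lt_of_mem hS hs).le, ZMod.natCast_self]
    ring
  have e2 : -(-(s : ZMod n) * j) = ((j * s : ℕ) : ZMod n) := by
    push_cast
    ring
  rw [e1, e2, ZMod.stdAddChar_natCast, ZMod.stdAddChar_natCast, add_comm]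

lemma forall_eigenvalue_eq_zero_iff [NeZero n] (hS : S ⊆ Icc 1 (n / 2)) (hSne : S.Nonempty)
    (hn : Even n) :
    (∀ k, eigenvalue n S k = 0 ↔ k = (n / 2 : ℕ)) ↔
      eigenvalue n S (n / 2 : ℕ) = 0 ∧ ∀ j : ℕ, 1 ≤ j → j ≤ n / 2 - 1 → eigenvalue n S j ≠ 0 := by
  have hhalf_lt : n / 2 < n := Nat.div_lt_self (Nat.pos_of_neZero n) one_lt_two
  constructor
  · intro h
    refine ⟨(h _).2 rfl, fun j hj1 hj2 hj => ?_⟩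
    have := congrArg ZMod.val ((h j).1 hj)
    rw [ZMod.val_natCast_of_lt (by omega), ZMod.val_natCast_of_lt hhalf_lt] at this
    omega
  · rintro ⟨hhalf, hj⟩ k
    refine ⟨fun hk => ?_, fun hk => hk ▸ hhalf⟩
    obtain ⟨j, hjle, hkj⟩ := ZMod.exists_le_half_eq_or_neg_eq k
    have hjzero : eigenvalue n S j = 0 := by
      rcases hkj with hkj | hkj <;> rw [← hkj]
      · exact hk
      · rwa [eigenvalue_neg]
    obtain rfl | hj0 := Nat.eq_zero_or_pos j
    · exact absurd (by simpa using hjzero) (eigenvalue_zero_ne_zero hS hSne)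
    obtain rfl | hjlt := eq_or_lt_of_le hjle
    · rcases hkj with hkj | hkj
      · exact hkj
      · rw [← ZMod.neg_natCast_half hn, ← hkj, neg_neg]
    · exact absurd hjzero (hj j hj0 (by omega))

theorem isNutGraph_iff [NeZero n] (hS : S ⊆ Icc 1 (n / 2)) (hSne : S.Nonempty) :
    IsNutGraph (circulantGraph n S) ↔ Even n ∧ ∀ k, eigenvalue n S k = 0 ↔ k = (n / 2 : ℕ) := by
  have h0 : 0 ∉ S := fun h => by simpa using hS h
  have hnullity : Module.finrank ℚ (LinearMap.ker (adjMatrixQ (circulantGraph n S)).mulVecLin) =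
      Fintype.card {k // eigenvalue n S k = 0} := by
    rw [adjMatrixQ_eq_circulant h0]
    exact ZMod.finrank_ker_circulant _
  rw [IsNutGraph, hnullity, Fintype.card_eq_one_iff]
  constructor
  · rintro ⟨-, ⟨⟨k₀, hk₀⟩, huniq⟩, -⟩
    have hzero (k) (hk : eigenvalue n S k = 0) : k = k₀ := congrArg Subtype.val (huniq ⟨k, hk⟩)
    obtain ⟨hn, rfl⟩ := ZMod.eq_natCast_half_of_neg_eq
      (fun h => eigenvalue_zero_ne_zero hS hSne (h ▸ hk₀)) (hzero _ (by rwa [eigenvalue_neg]))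
    exact ⟨hn, fun k => ⟨hzero k, fun hk => hk ▸ hk₀⟩⟩
  · rintro ⟨hn, hzero⟩
    have hsum : ∑ m, symbol n S m * (-1 : ℚ) ^ m.val = 0 := by
      exact_mod_cast (eigenvalue_natCast_half hn).symm.trans ((hzero _).2 rfl)
    refine ⟨inferInstance, ⟨⟨_, (hzero _).2 rfl⟩, fun k => Subtype.ext ((hzero k).1 k.2)⟩,
      fun i => (-1) ^ i.val, ?_, fun i => pow_ne_zero _ (neg_ne_zero.2 one_ne_zero)⟩
    rw [adjMatrixQ_eq_circulant h0, ZMod.circulant_mulVec_neg_one_pow hn, hsum, zero_smul]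

end circulantGraph

theorem circulant_nut_graph_characterization_general (n : ℕ) [NeZero n]
    (S : Finset ℕ) (hSne : S.Nonempty) (hSsub : S ⊆ Finset.Icc 1 (n / 2)) :
    IsNutGraph (circulantGraph n S) ↔
      (Even n ∧
        (∃ t : ℕ, 1 ≤ t ∧ (∀ s ∈ S, 1 ≤ s ∧ s ≤ n / 2 - 1) ∧
          (S.filter fun s => s % 2 = 1).card = t ∧ (S.filter fun s => s % 2 = 0).card = t) ∧
        (∀ j : ℕ, 1 ≤ j → j ≤ n / 2 - 1 →
          (∑ s ∈ S, ((Complex.exp (2 * (Real.pi : ℂ) * Complex.I / (n : ℂ))) ^ (j * s) +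
            (Complex.exp (2 * (Real.pi : ℂ) * Complex.I / (n : ℂ))) ^ (j * (n - s)))) ≠ 0)) := by
  rw [circulantGraph.isNutGraph_iff hSsub hSne]
  refine and_congr_right fun hn => ?_
  rw [circulantGraph.forall_eigenvalue_eq_zero_iff hSsub hSne hn,
    circulantGraph.eigenvalue_natCast_half hn, Rat.cast_eq_zero,
    circulantGraph.sum_symbol_mul_neg_one_pow_eq_zero_iff hSsub hn,
    circulantGraph.exists_card_odd_eq_card_even_iff hSsub hSne]
  refine and_congr_right fun hbalanced => forall₃_congr fun j _ _ => ?_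
  rw [circulantGraph.eigenvalue_natCast hSsub hbalanced.1]

/-- Characterization of circulant nut graphs (Damnjanović–Stevanović): `Circ(n, S)` with `n ≥ 2`
and nonempty `S ⊆ {1, …, ⌊n/2⌋}` is a nut graph iff `n` is even, `S` consists of `t` odd and
`t` even integers from `{1, …, n/2 − 1}` for some `t ≥ 1`, and `P(ω^j) ≠ 0` for
`j = 1, …, n/2 − 1`, where `ω = e^{2πi/n}` and `P(x) = Σ_{s ∈ S} (x^s + x^{n−s})`. -/
theorem circulant_nut_graph_characterization (n : ℕ) [NeZero n] (hn : 2 ≤ n)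
    (S : Finset ℕ) (hSne : S.Nonempty) (hSsub : S ⊆ Finset.Icc 1 (n / 2)) :
    IsNutGraph (circulantGraph n S) ↔
      (Even n ∧
        (∃ t : ℕ, 1 ≤ t ∧ (∀ s ∈ S, 1 ≤ s ∧ s ≤ n / 2 - 1) ∧
          (S.filter fun s => s % 2 = 1).card = t ∧ (S.filter fun s => s % 2 = 0).card = t) ∧
        (∀ j : ℕ, 1 ≤ j → j ≤ n / 2 - 1 →
          (∑ s ∈ S, ((Complex.exp (2 * (Real.pi : ℂ) * Complex.I / (n : ℂ))) ^ (j * s) +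
            (Complex.exp (2 * (Real.pi : ℂ) * Complex.I / (n : ℂ))) ^ (j * (n - s)))) ≠ 0)) :=
  circulant_nut_graph_characterization_general n S hSne hSsub
end

section
/- For each integer t ≥ 4 with 4 ∣ t, the circulant graph Circ(4t + 8, {1, 2, 3, …, 2t + 3} \ {t + 1, t + 3, t + 4}) is a 4t-regular nut graph of order 4t + 8. -/
open Finset ZMod

section RootsOfUnity

open Polynomial

lemma cyclotomic_dvd_of_aeval_eq_zero {ζ : ℂ} {m : ℕ} (hζ : IsPrimitiveRoot ζ m) (hm : 0 < m)
    {p : ℤ[X]} (hp : aeval ζ p = 0) : cyclotomic m ℤ ∣ p := by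
  rw [cyclotomic_eq_minpoly hζ hm]
  exact minpoly.isIntegrallyClosed_dvd (hζ.isIntegral hm) hp

lemma orderOf_two_zmod_29 : orderOf (2 : ZMod 29) = 28 :=
  (orderOf_eq_iff (by norm_num)).2 ⟨by decide, by decide⟩

theorem quartic_ne_zero_of_pow_eq_one {ζ : ℂ} {N : ℕ} (hN : 0 < N) (hζ : ζ ^ N = 1) :
    ζ ^ 4 + 2 * ζ ^ 3 - 2 * ζ ^ 2 + 2 * ζ + 1 ≠ 0 := by
  intro h
  set p : ℤ[X] := X ^ 4 + 2 * X ^ 3 - 2 * X ^ 2 + 2 * X + 1 with hp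
  set m := orderOf ζ
  have hm : 0 < m := (isOfFinOrder_iff_pow_eq_one.2 ⟨N, hN, hζ⟩).orderOf_pos
  have hm1 : m ≠ 1 := by
    intro h1
    rw [orderOf_eq_one_iff.1 h1] at h
    norm_num at h
  have hdvd : cyclotomic m ℤ ∣ p :=
    cyclotomic_dvd_of_aeval_eq_zero (.orderOf ζ) hm (by simpa [hp, map_ofNat] using h)
  have hdeg : m.totient ≤ 4 := by
    have := natDegree_le_of_dvd hdvd (by intro h0; simpa [hp] using congrArg (eval 0) h0)
    rw [natDegree_cyclotomic] at this
    exact this.trans (by rw [hp]; compute_degree)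
  have h29 : (cyclotomic m ℤ).eval 2 ∣ 29 := by
    simpa [hp] using eval_dvd (x := 2) hdvd
  have habs : ((cyclotomic m ℤ).eval 2).natAbs = 29 := by
    have hlt := sub_one_lt_natAbs_cyclotomic_eval (n := m) (q := 2) (by omega) (by norm_num)
    rw [Nat.cast_ofNat] at hlt
    have := (by norm_num : Nat.Prime 29).eq_one_or_self_of_dvd _ (Int.natAbs_dvd_natAbs.2 h29)
    omega
  have hpow : (2 : ZMod 29) ^ m = 1 := by
    have h2m : (29 : ℤ) ∣ 2 ^ m - 1 := by
      refine dvd_trans (Int.ofNat_dvd_left.2 (by rw [habs])) ?_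
      simpa using eval_dvd (x := (2 : ℤ)) (cyclotomic.dvd_X_pow_sub_one m ℤ)
    have := (ZMod.intCast_zmod_eq_zero_iff_dvd _ 29).2 h2m
    push_cast at this
    exact sub_eq_zero.1 this
  have h12 : 12 ∣ m.totient := by
    have := Nat.totient_dvd_of_dvd (orderOf_two_zmod_29 ▸ orderOf_dvd_of_pow_eq_one hpow)
    rwa [show Nat.totient 28 = 12 by decide] at this
  have := Nat.le_of_dvd (Nat.totient_pos.2 hm) h12
  omega

end RootsOfUnity

lemma sum_Icc_pow_add_inv_pow {K : Type*} [Field K] {ζ : K} {h : ℕ} (hζ : ζ ^ (2 * h + 2) = 1)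
    (hζ1 : ζ ≠ 1) : ∑ s ∈ Icc 1 h, (ζ ^ s + (ζ ^ s)⁻¹) = -1 - ζ ^ (h + 1) := by
  have hζ0 : ζ ≠ 0 := by rintro rfl; simp at hζ
  have hε : (ζ ^ (h + 1))⁻¹ = ζ ^ (h + 1) :=
    inv_eq_of_mul_eq_one_left (by rw [← pow_add, ← hζ]; ring_nf)
  have hA := geom_sum_Ico_mul ζ (Nat.le_add_left 1 h)
  have hB := geom_sum_Ico_mul ζ⁻¹ (Nat.le_add_left 1 h)
  rw [inv_pow, hε, Ico_add_one_right_eq_Icc] at hB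
  rw [Ico_add_one_right_eq_Icc] at hA
  simp_rw [sum_add_distrib, ← inv_pow]
  refine mul_right_cancel₀ (sub_ne_zero.2 hζ1) ?_
  linear_combination hA - ζ * hB + (∑ s ∈ Icc 1 h, ζ⁻¹ ^ s + 1) * mul_inv_cancel₀ hζ0

lemma eq_neg_one_of_quartic_relation {ζ μ : ℂ} {u : ℕ} (hζ : ζ ^ (16 * u + 8) = 1)
    (hμ : μ = ζ ^ (4 * u + 2))
    (h : μ * ζ ^ 2 * (1 + μ ^ 2) + μ ^ 2 * (ζ + ζ ^ 3 + ζ ^ 4) + ζ ^ 3 + ζ + 1 = 0) :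
    ζ = -1 := by
  have hμ4 : μ ^ 4 = 1 := by rw [hμ, ← pow_mul, ← hζ]; ring_nf
  have hμ_of : ζ ^ 4 = 1 → μ = ζ ^ 2 := fun h4 ↦ by rw [hμ, pow_add, pow_mul, h4, one_pow, one_mul]
  have hμ_cases : (μ - 1) * (μ + 1) * (μ ^ 2 + 1) = 0 := by linear_combination hμ4
  rcases mul_eq_zero.1 hμ_cases with hμ_cases | hμ_sq
  · rcases mul_eq_zero.1 hμ_cases with hμ1 | hμ1
    · obtain rfl : μ = 1 := by linear_combination hμ1
      have hfac : (ζ ^ 2 + 1) * (ζ + 1) ^ 2 = 0 := by linear_combination h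
      rcases mul_eq_zero.1 hfac with hζ2 | hζ1
      · have := hμ_of (by linear_combination (ζ ^ 2 - 1) * hζ2)
        have : (2 : ℂ) = 0 := by linear_combination this + hζ2
        norm_num at this
      · linear_combination pow_eq_zero_iff (n := 2) (by norm_num) |>.1 hζ1
    · obtain rfl : μ = -1 := by linear_combination hμ1
      exact absurd (by linear_combination h)
        (quartic_ne_zero_of_pow_eq_one (by omega : 0 < 16 * u + 8) hζ)
  · have hζ4 : ζ ^ 4 = 1 := by
      linear_combination -h + (μ * ζ ^ 2 + ζ + ζ ^ 3 + ζ ^ 4) * hμ_sq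
    have : (2 : ℂ) = 0 := by
      linear_combination hμ_sq - (μ + ζ ^ 2) * hμ_of hζ4 - hζ4
    norm_num at this

def nutConnectionSet (t : ℕ) : Finset ℕ :=
  Icc 1 (2 * t + 3) \ {t + 1, t + 3, t + 4}

section NutConnectionSet

variable {t : ℕ}

lemma removed_subset_Icc (ht : 0 < t) : ({t + 1, t + 3, t + 4} : Finset ℕ) ⊆ Icc 1 (2 * t + 3) := by
  intro s hs
  simp only [mem_insert, mem_singleton] at hs
  simp only [mem_Icc]
  omega

lemma bounds_of_mem_nutConnectionSet {n s : ℕ} (hn : n = 4 * t + 8)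
    (hs : s ∈ nutConnectionSet t) : 0 < s ∧ 2 * s < n := by
  simp only [nutConnectionSet, mem_sdiff, mem_Icc] at hs
  omega

lemma zero_notMem_nutConnectionSet : 0 ∉ nutConnectionSet t := by
  simp [nutConnectionSet]

lemma card_nutConnectionSet (ht : 0 < t) : #(nutConnectionSet t) = 2 * t := by
  rw [nutConnectionSet, card_sdiff_of_subset (removed_subset_Icc ht), Nat.card_Icc,
    card_insert_of_notMem (by simp), card_insert_of_notMem (by simp), card_singleton]
  omega

theorem sum_nutConnectionSet_pow_add_inv_pow_eq_zero_iff (ht : 0 < t) (h4 : 4 ∣ t) {ζ : ℂ}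
    (hζ : ζ ^ (4 * t + 8) = 1) :
    ∑ s ∈ nutConnectionSet t, (ζ ^ s + (ζ ^ s)⁻¹) = 0 ↔ ζ = -1 := by
  by_cases hζ1 : ζ = 1
  · subst hζ1
    simp only [one_pow, inv_one, sum_const, card_nutConnectionSet ht, nsmul_eq_mul]
    norm_num
    omega
  have hζ0 : ζ ≠ 0 := by rintro rfl; simp at hζ
  rw [nutConnectionSet, sum_sdiff_eq_sub (removed_subset_Icc ht), sum_insert (by simp),
    sum_insert (by simp), sum_singleton, sum_Icc_pow_add_inv_pow (by rw [← hζ]; ring_nf) hζ1]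
  obtain ⟨u, rfl⟩ := h4
  set μ := ζ ^ (4 * u + 2) with hμ
  have hμ0 : μ ≠ 0 := pow_ne_zero _ hζ0
  have e1 : ζ ^ (4 * u + 1) = μ * ζ⁻¹ := by
    rw [hμ, show 4 * u + 2 = 4 * u + 1 + 1 by ring, pow_succ ζ (4 * u + 1),
      mul_inv_cancel_right₀ hζ0]
  have e3 : ζ ^ (4 * u + 3) = μ * ζ := by rw [hμ, ← pow_succ]
  have e4 : ζ ^ (4 * u + 4) = μ * ζ ^ 2 := by rw [hμ, ← pow_add]
  have e8 : ζ ^ (2 * (4 * u) + 3 + 1) = μ ^ 2 := by rw [hμ, ← pow_mul]; ring_nf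
  rw [e1, e3, e4, e8, ← mul_left_inj' (mul_ne_zero hμ0 (pow_ne_zero 2 hζ0)), zero_mul]
  have hclear : (-1 - μ ^ 2 - (μ * ζ⁻¹ + (μ * ζ⁻¹)⁻¹ + (μ * ζ + (μ * ζ)⁻¹
      + (μ * ζ ^ 2 + (μ * ζ ^ 2)⁻¹)))) * (μ * ζ ^ 2)
      = -(μ * ζ ^ 2 * (1 + μ ^ 2) + μ ^ 2 * (ζ + ζ ^ 3 + ζ ^ 4) + ζ ^ 3 + ζ + 1) := by
    field_simp
    ring
  rw [hclear, neg_eq_zero]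
  refine ⟨eq_neg_one_of_quartic_relation (by rw [← hζ]; ring_nf) hμ, ?_⟩
  rintro rfl
  rw [hμ, Even.neg_one_pow ⟨2 * u + 1, by ring⟩]
  norm_num

end NutConnectionSet

section Fourier

variable {N : ℕ} [NeZero N]

lemma ZMod.dft_comp_add_right (Φ : ZMod N → ℂ) (d k : ZMod N) :
    𝓕 (fun j ↦ Φ (j + d)) k = stdAddChar (d * k) * 𝓕 Φ k := by
  simp only [dft_apply, smul_eq_mul, mul_sum]
  refine Fintype.sum_equiv (Equiv.addRight d) _ _ fun j ↦ ?_
  rw [Equiv.coe_addRight, ← mul_assoc, ← AddChar.map_add_eq_mul]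
  ring_nf

lemma ZMod.dft_eq_zero_of_sum_translate_eq_zero (D : Finset (ZMod N)) {Φ : ZMod N → ℂ}
    (hΦ : ∀ i, ∑ d ∈ D, Φ (i + d) = 0) {k : ZMod N} (hk : ∑ d ∈ D, stdAddChar (d * k) ≠ 0) :
    𝓕 Φ k = 0 := by
  have h : 𝓕 (∑ d ∈ D, fun i ↦ Φ (i + d)) k = (∑ d ∈ D, stdAddChar (d * k)) * 𝓕 Φ k := by
    simp only [map_sum, Finset.sum_apply, dft_comp_add_right, sum_mul]
  have h0 : (∑ d ∈ D, fun i ↦ Φ (i + d)) = 0 := funext fun i ↦ by simpa using hΦ i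
  rw [h0, map_zero, Pi.zero_apply, eq_comm] at h
  exact (mul_eq_zero.1 h).resolve_left hk

lemma ZMod.eq_stdAddChar_mul_of_dft_eq_zero {Φ : ZMod N → ℂ} {k₀ : ZMod N}
    (h : ∀ k, k ≠ k₀ → 𝓕 Φ k = 0) (j : ZMod N) : Φ j = stdAddChar (k₀ * j) * Φ 0 := by
  have hinv : ∀ j, Φ j = (N : ℂ)⁻¹ * (stdAddChar (k₀ * j) * 𝓕 Φ k₀) := fun j ↦ by
    conv_lhs => rw [← dft.symm_apply_apply Φ]
    rw [invDFT_apply, smul_eq_mul, sum_eq_single k₀ (fun k _ hk ↦ by rw [h k hk, smul_zero])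
      (by simp), smul_eq_mul]
  rw [hinv j, hinv 0, mul_zero, AddChar.map_zero_eq_one]
  ring

theorem ZMod.sum_translate_eq_zero_iff {D : Finset (ZMod N)} {k₀ : ZMod N}
    (hD : ∀ k, ∑ d ∈ D, stdAddChar (d * k) = 0 ↔ k = k₀) (Φ : ZMod N → ℂ) :
    (∀ i, ∑ d ∈ D, Φ (i + d) = 0) ↔ ∀ j, Φ j = stdAddChar (k₀ * j) * Φ 0 := by
  refine ⟨fun hΦ ↦ eq_stdAddChar_mul_of_dft_eq_zero fun k hk ↦
    dft_eq_zero_of_sum_translate_eq_zero D hΦ (mt (hD k).1 hk), fun hΦ i ↦ ?_⟩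
  calc ∑ d ∈ D, Φ (i + d)
      = ∑ d ∈ D, stdAddChar (k₀ * i) * stdAddChar (d * k₀) * Φ 0 := sum_congr rfl fun d _ ↦ by
        rw [hΦ, mul_add, AddChar.map_add_eq_mul, mul_comm k₀ d]
    _ = stdAddChar (k₀ * i) * (∑ d ∈ D, stdAddChar (d * k₀)) * Φ 0 := by rw [mul_sum, sum_mul]
    _ = 0 := by rw [(hD k₀).2 rfl, mul_zero, zero_mul]

lemma ZMod.stdAddChar_pow_eq_one (k : ZMod N) : stdAddChar k ^ N = 1 := by
  rw [← AddChar.map_nsmul_eq_pow, nsmul_eq_mul, natCast_self, zero_mul, AddChar.map_zero_eq_one]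

lemma ZMod.stdAddChar_natCast_of_two_mul {m : ℕ} (hN : N = 2 * m) :
    stdAddChar (m : ZMod N) = -1 := by
  have hm : (m : ℂ) ≠ 0 := by have := NeZero.ne N; norm_cast; omega
  rw [← Int.cast_natCast, stdAddChar_coe, hN]
  push_cast
  rw [show 2 * Real.pi * Complex.I * m / (2 * m) = Real.pi * Complex.I by field_simp]
  exact Complex.exp_pi_mul_I

lemma ZMod.stdAddChar_mul_eq_neg_one_pow {k : ZMod N} (hk : stdAddChar k = -1) (j : ZMod N) :
    stdAddChar (k * j) = (-1) ^ j.val := by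
  rw [← hk, ← AddChar.map_nsmul_eq_pow, nsmul_eq_mul, natCast_zmod_val, mul_comm]

end Fourier

section Circulant

variable {n : ℕ} [NeZero n] {S : Finset ℕ}

def circulantDiffs (n : ℕ) [NeZero n] (S : Finset ℕ) : Finset (ZMod n) :=
  univ.filter fun d ↦ d.val ∈ S ∨ (-d).val ∈ S

lemma circulantGraph_adj_iff (hS : 0 ∉ S) {i j : ZMod n} :
    (circulantGraph n S).Adj i j ↔ j - i ∈ circulantDiffs n S := by
  simp only [circulantGraph, circulantDiffs, mem_filter, mem_univ, true_and, neg_sub]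
  refine ⟨fun h ↦ h.2.symm, fun h ↦ ⟨?_, h.symm⟩⟩
  rintro rfl
  simp [hS] at h

lemma adjMatrixQ_circulantGraph_mulVec (hS : 0 ∉ S) (x : ZMod n → ℚ) (i : ZMod n) :
    (adjMatrixQ (circulantGraph n S)).mulVec x i = ∑ d ∈ circulantDiffs n S, x (i + d) := by
  simp only [Matrix.mulVec, dotProduct, adjMatrixQ, Matrix.of_apply, circulantGraph_adj_iff hS,
    ite_mul, one_mul, zero_mul]
  rw [← sum_filter]
  exact sum_nbij' (· - i) (i + ·) (by simp) (by simp) (by simp) (by simp) (by simp)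

lemma ncard_neighborSet_circulantGraph (hS : 0 ∉ S) (v : ZMod n) :
    ((circulantGraph n S).neighborSet v).ncard = #(circulantDiffs n S) := by
  have : (circulantGraph n S).neighborSet v = (v + ·) '' circulantDiffs n S := by
    ext j
    simp only [SimpleGraph.mem_neighborSet, circulantGraph_adj_iff hS, Set.mem_image, mem_coe]
    exact ⟨fun h ↦ ⟨j - v, h, add_sub_cancel v j⟩, by rintro ⟨d, hd, rfl⟩; simpa using hd⟩
  rw [this, Set.ncard_image_of_injective _ (add_right_injective v), Set.ncard_coe_finset]

lemma sum_circulantDiffs {M : Type*} [AddCommMonoid M] (hS : ∀ s ∈ S, 0 < s ∧ 2 * s < n)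
    (f : ZMod n → M) : ∑ d ∈ circulantDiffs n S, f d = ∑ s ∈ S, (f s + f (-s)) := by
  have hval : ∀ s ∈ S, (s : ZMod n).val = s := fun s hs ↦ val_cast_of_lt (by grind)
  have hdisj : Disjoint (univ.filter fun d : ZMod n ↦ d.val ∈ S)
      (univ.filter fun d : ZMod n ↦ (-d).val ∈ S) := by
    refine disjoint_filter.2 fun d _ hd hd' ↦ ?_
    have := (hS _ hd).2
    have := (hS _ hd').2
    rw [neg_val] at this
    split_ifs at this with hd0
    · simpa [hd0] using (hS _ hd).1
    · have := d.val_lt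
      omega
  rw [circulantDiffs, filter_or, sum_union hdisj, sum_add_distrib]
  congr 1
  · exact sum_nbij' (fun d ↦ d.val) (fun s ↦ s) (by simp) (fun s hs ↦ by simp [hval s hs, hs])
      (fun d _ ↦ natCast_zmod_val d) (fun s hs ↦ hval s hs) (fun d _ ↦ by rw [natCast_zmod_val])
  · exact sum_nbij' (fun d ↦ (-d).val) (fun s ↦ -s) (by simp)
      (fun s hs ↦ by simp [hval s hs, hs]) (fun d _ ↦ by simp) (fun s hs ↦ by simp [hval s hs])
      (fun d _ ↦ by simp)

lemma card_circulantDiffs (hS : ∀ s ∈ S, 0 < s ∧ 2 * s < n) :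
    #(circulantDiffs n S) = 2 * #S := by
  rw [card_eq_sum_ones, sum_circulantDiffs hS, card_eq_sum_ones, mul_sum]
  rfl

lemma sum_circulantDiffs_stdAddChar (hS : ∀ s ∈ S, 0 < s ∧ 2 * s < n) (k : ZMod n) :
    ∑ d ∈ circulantDiffs n S, stdAddChar (d * k)
      = ∑ s ∈ S, (stdAddChar k ^ s + (stdAddChar k ^ s)⁻¹) := by
  rw [sum_circulantDiffs hS]
  refine sum_congr rfl fun s _ ↦ ?_
  rw [neg_mul, AddChar.map_neg_eq_inv, ← AddChar.map_nsmul_eq_pow, nsmul_eq_mul]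

end Circulant

section NutGraph

variable {t n : ℕ} [NeZero n] (hn : n = 4 * t + 8)
include hn

lemma sum_circulantDiffs_nutConnectionSet_stdAddChar_eq_zero_iff (ht : 0 < t) (h4 : 4 ∣ t)
    (k : ZMod n) :
    ∑ d ∈ circulantDiffs n (nutConnectionSet t), stdAddChar (d * k) = 0
      ↔ k = ((2 * t + 4 : ℕ) : ZMod n) := by
  rw [sum_circulantDiffs_stdAddChar (fun s ↦ bounds_of_mem_nutConnectionSet hn),
    sum_nutConnectionSet_pow_add_inv_pow_eq_zero_iff ht h4 (hn ▸ stdAddChar_pow_eq_one k),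
    ← stdAddChar_natCast_of_two_mul (by omega : n = 2 * (2 * t + 4)), injective_stdAddChar.eq_iff]

theorem mem_ker_adjMatrixQ_circulantGraph_nutConnectionSet_iff (ht : 0 < t) (h4 : 4 ∣ t)
    (v : ZMod n → ℚ) :
    v ∈ LinearMap.ker (adjMatrixQ (circulantGraph n (nutConnectionSet t))).mulVecLin
      ↔ ∀ j, v j = (-1) ^ j.val * v 0 := by
  rw [LinearMap.mem_ker, Matrix.mulVecLin_apply, funext_iff]
  simp only [adjMatrixQ_circulantGraph_mulVec zero_notMem_nutConnectionSet, Pi.zero_apply]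
  calc (∀ i, ∑ d ∈ circulantDiffs n (nutConnectionSet t), v (i + d) = 0)
      ↔ ∀ i, ∑ d ∈ circulantDiffs n (nutConnectionSet t), (v (i + d) : ℂ) = 0 := by
        simp only [← Rat.cast_sum, Rat.cast_eq_zero]
    _ ↔ ∀ j, (v j : ℂ) = stdAddChar (((2 * t + 4 : ℕ) : ZMod n) * j) * v 0 :=
        sum_translate_eq_zero_iff
          (sum_circulantDiffs_nutConnectionSet_stdAddChar_eq_zero_iff hn ht h4) (v · : ZMod n → ℂ)
    _ ↔ ∀ j, v j = (-1) ^ j.val * v 0 := by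
        simp only [stdAddChar_mul_eq_neg_one_pow
          (stdAddChar_natCast_of_two_mul (by omega : n = 2 * (2 * t + 4)))]
        norm_cast

theorem isNutGraph_circulantGraph_nutConnectionSet (ht : 0 < t) (h4 : 4 ∣ t) :
    IsNutGraph (circulantGraph n (nutConnectionSet t)) := by
  set w : ZMod n → ℚ := fun j ↦ (-1) ^ j.val
  have hker : LinearMap.ker (adjMatrixQ (circulantGraph n (nutConnectionSet t))).mulVecLin
      = ℚ ∙ w := by
    ext v
    rw [mem_ker_adjMatrixQ_circulantGraph_nutConnectionSet_iff hn ht h4,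
      Submodule.mem_span_singleton]
    refine ⟨fun h ↦ ⟨v 0, funext fun j ↦ by simp [w, h j, mul_comm]⟩, ?_⟩
    rintro ⟨c, rfl⟩ j
    simp [w, mul_comm]
  have hw : ∀ j, w j ≠ 0 := fun j ↦ pow_ne_zero _ (by norm_num)
  refine ⟨⟨0⟩, ?_, w, ?_, hw⟩
  · rw [hker, finrank_span_singleton fun h ↦ hw 0 (congrFun h 0)]
  · exact LinearMap.mem_ker.1 (hker ▸ Submodule.mem_span_singleton_self w)

lemma ncard_neighborSet_circulantGraph_nutConnectionSet (ht : 0 < t) (v : ZMod n) :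
    ((circulantGraph n (nutConnectionSet t)).neighborSet v).ncard = 4 * t := by
  rw [ncard_neighborSet_circulantGraph zero_notMem_nutConnectionSet,
    card_circulantDiffs fun s ↦ bounds_of_mem_nutConnectionSet hn, card_nutConnectionSet ht]
  ring

end NutGraph

/-- For each `t ≥ 4` with `4 ∣ t`, the circulant graph
`Circ(4t + 8, {1, …, 2t + 3} \ {t + 1, t + 3, t + 4})` is a `4t`-regular nut graph of
order `4t + 8`. -/
theorem circulant_nut_graph_4t_plus_8_case1 (t n : ℕ) [NeZero n] (hn : n = 4 * t + 8)
    (ht : 4 ≤ t) (hdvd : 4 ∣ t) :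
    IsNutGraph (circulantGraph n (Finset.Icc 1 (2 * t + 3) \ {t + 1, t + 3, t + 4})) ∧
      ∀ v : ZMod n,
        ((circulantGraph n (Finset.Icc 1 (2 * t + 3) \ {t + 1, t + 3, t + 4})).neighborSet
            v).ncard = 4 * t := by
  have ht0 : 0 < t := by omega
  exact ⟨isNutGraph_circulantGraph_nutConnectionSet hn ht0 hdvd,
    ncard_neighborSet_circulantGraph_nutConnectionSet hn ht0⟩
end

section
/- For each even integer t ≥ 6 and each integer β ≥ 10, the set L'_t contains an element whose remainder modulo β is distinct from the remainders modulo β of all other elements of L'_t. -/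
private lemma mod_cases3 (β v : ℕ) (hβ : 0 < β) (h : v < 3 * β) :
    (v < β ∧ v % β = v) ∨ (β ≤ v ∧ v < 2 * β ∧ v % β = v - β) ∨
      (2 * β ≤ v ∧ v % β = v - 2 * β) := by
  rcases Nat.lt_or_ge v β with h1 | h1
  · exact Or.inl ⟨h1, Nat.mod_eq_of_lt h1⟩
  rcases Nat.lt_or_ge v (2 * β) with h2 | h2
  · refine Or.inr (Or.inl ⟨h1, h2, ?_⟩)
    rw [Nat.mod_eq_sub_mod h1, Nat.mod_eq_of_lt (by omega)]
  · refine Or.inr (Or.inr ⟨h2, ?_⟩)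
    rw [Nat.mod_eq_sub_mod h1, Nat.mod_eq_sub_mod (by omega : β ≤ v - β),
      Nat.mod_eq_of_lt (by omega)]
    omega

private lemma modeq_sub_cancel (β x y c : ℕ) (hcx : c ≤ x) (hcy : c ≤ y)
    (h : x ≡ y [MOD β]) : x - c ≡ y - c [MOD β] := by
  have h1 : (x - c) + c ≡ (y - c) + c [MOD β] := by
    rw [Nat.sub_add_cancel hcx, Nat.sub_add_cancel hcy]; exact h
  exact h1.add_right_cancel' c

private lemma key (β u r3 r4 r5 r6 r7 r8 r9 : ℕ) (hβ : 10 ≤ β) (hult : u < β)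
    (h3 : (u + β - 2 < β ∧ r3 = u + β - 2) ∨ (β ≤ u + β - 2 ∧ u + β - 2 < 2 * β ∧ r3 = u + β - 2 - β) ∨
      (2 * β ≤ u + β - 2 ∧ r3 = u + β - 2 - 2 * β))
    (h4 : (u + β - 1 < β ∧ r4 = u + β - 1) ∨ (β ≤ u + β - 1 ∧ u + β - 1 < 2 * β ∧ r4 = u + β - 1 - β) ∨
      (2 * β ≤ u + β - 1 ∧ r4 = u + β - 1 - 2 * β))
    (h5 : (u + 2 < β ∧ r5 = u + 2) ∨ (β ≤ u + 2 ∧ u + 2 < 2 * β ∧ r5 = u + 2 - β) ∨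
      (2 * β ≤ u + 2 ∧ r5 = u + 2 - 2 * β))
    (h6 : (u + 3 < β ∧ r6 = u + 3) ∨ (β ≤ u + 3 ∧ u + 3 < 2 * β ∧ r6 = u + 3 - β) ∨
      (2 * β ≤ u + 3 ∧ r6 = u + 3 - 2 * β))
    (h7 : (2 * u + β - 2 < β ∧ r7 = 2 * u + β - 2) ∨
      (β ≤ 2 * u + β - 2 ∧ 2 * u + β - 2 < 2 * β ∧ r7 = 2 * u + β - 2 - β) ∨
      (2 * β ≤ 2 * u + β - 2 ∧ r7 = 2 * u + β - 2 - 2 * β))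
    (h8 : (2 * u + β - 1 < β ∧ r8 = 2 * u + β - 1) ∨
      (β ≤ 2 * u + β - 1 ∧ 2 * u + β - 1 < 2 * β ∧ r8 = 2 * u + β - 1 - β) ∨
      (2 * β ≤ 2 * u + β - 1 ∧ r8 = 2 * u + β - 1 - 2 * β))
    (h9 : (2 * u + 1 < β ∧ r9 = 2 * u + 1) ∨ (β ≤ 2 * u + 1 ∧ 2 * u + 1 < 2 * β ∧ r9 = 2 * u + 1 - β) ∨
      (2 * β ≤ 2 * u + 1 ∧ r9 = 2 * u + 1 - 2 * β)) :
    (2 ≠ 0 ∧ 3 ≠ 0 ∧ r3 ≠ 0 ∧ r4 ≠ 0 ∧ r5 ≠ 0 ∧ r6 ≠ 0 ∧ r7 ≠ 0 ∧ r8 ≠ 0 ∧ r9 ≠ 0) ∨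
      (0 ≠ 2 ∧ 3 ≠ 2 ∧ r3 ≠ 2 ∧ r4 ≠ 2 ∧ r5 ≠ 2 ∧ r6 ≠ 2 ∧ r7 ≠ 2 ∧ r8 ≠ 2 ∧ r9 ≠ 2) ∨
      (0 ≠ r4 ∧ 2 ≠ r4 ∧ 3 ≠ r4 ∧ r3 ≠ r4 ∧ r5 ≠ r4 ∧ r6 ≠ r4 ∧ r7 ≠ r4 ∧ r8 ≠ r4 ∧ r9 ≠ r4) ∨
      (0 ≠ r5 ∧ 2 ≠ r5 ∧ 3 ≠ r5 ∧ r3 ≠ r5 ∧ r4 ≠ r5 ∧ r6 ≠ r5 ∧ r7 ≠ r5 ∧ r8 ≠ r5 ∧ r9 ≠ r5) ∨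
      (0 ≠ r6 ∧ 2 ≠ r6 ∧ 3 ≠ r6 ∧ r3 ≠ r6 ∧ r4 ≠ r6 ∧ r5 ≠ r6 ∧ r7 ≠ r6 ∧ r8 ≠ r6 ∧ r9 ≠ r6) := by
    have hcase : u = 0 ∨ u = 1 ∨ u = 2 ∨ u = 3 ∨ u = 4 ∨ u = 5 ∨ (6 ≤ u ∧ u + 4 ≤ β) ∨
        u = β - 3 ∨ u = β - 2 ∨ u = β - 1 := by omega
    rcases hcase with hc | hc | hc | hc | hc | hc | hc | hc | hc | hc
    · have g3 : r3 = β - 2 := by clear h4 h5 h6 h7 h8 h9; omega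
      have g4 : r4 = β - 1 := by clear h3 h5 h6 h7 h8 h9; omega
      have g5 : r5 = 2 := by clear h3 h4 h6 h7 h8 h9; omega
      have g6 : r6 = 3 := by clear h3 h4 h5 h7 h8 h9; omega
      have g7 : r7 = β - 2 := by clear h3 h4 h5 h6 h8 h9; omega
      have g8 : r8 = β - 1 := by clear h3 h4 h5 h6 h7 h9; omega
      have g9 : r9 = 1 := by clear h3 h4 h5 h6 h7 h8; omega
      clear h3
      clear h4
      clear h5
      clear h6
      clear h7
      clear h8
      clear h9
      exact Or.inl (by omega)
    · have g3 : r3 = β - 1 := by clear h4 h5 h6 h7 h8 h9; omega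
      have g4 : r4 = 0 := by clear h3 h5 h6 h7 h8 h9; omega
      have g5 : r5 = 3 := by clear h3 h4 h6 h7 h8 h9; omega
      have g6 : r6 = 4 := by clear h3 h4 h5 h7 h8 h9; omega
      have g7 : r7 = 0 := by clear h3 h4 h5 h6 h8 h9; omega
      have g8 : r8 = 1 := by clear h3 h4 h5 h6 h7 h9; omega
      have g9 : r9 = 3 := by clear h3 h4 h5 h6 h7 h8; omega
      clear h3
      clear h4
      clear h5
      clear h6
      clear h7
      clear h8
      clear h9
      exact Or.inr (Or.inl (by omega))
    · have g3 : r3 = 0 := by clear h4 h5 h6 h7 h8 h9; omega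
      have g4 : r4 = 1 := by clear h3 h5 h6 h7 h8 h9; omega
      have g5 : r5 = 4 := by clear h3 h4 h6 h7 h8 h9; omega
      have g6 : r6 = 5 := by clear h3 h4 h5 h7 h8 h9; omega
      have g7 : r7 = 2 := by clear h3 h4 h5 h6 h8 h9; omega
      have g8 : r8 = 3 := by clear h3 h4 h5 h6 h7 h9; omega
      have g9 : r9 = 5 := by clear h3 h4 h5 h6 h7 h8; omega
      clear h3
      clear h4
      clear h5
      clear h6
      clear h7
      clear h8
      clear h9
      exact Or.inr (Or.inr (Or.inl (by omega)))
    · have g3 : r3 = 1 := by clear h4 h5 h6 h7 h8 h9; omega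
      have g4 : r4 = 2 := by clear h3 h5 h6 h7 h8 h9; omega
      have g5 : r5 = 5 := by clear h3 h4 h6 h7 h8 h9; omega
      have g6 : r6 = 6 := by clear h3 h4 h5 h7 h8 h9; omega
      have g7 : r7 = 4 := by clear h3 h4 h5 h6 h8 h9; omega
      have g8 : r8 = 5 := by clear h3 h4 h5 h6 h7 h9; omega
      have g9 : r9 = 7 := by clear h3 h4 h5 h6 h7 h8; omega
      clear h3
      clear h4
      clear h5
      clear h6
      clear h7
      clear h8
      clear h9
      exact Or.inl (by omega)
    · have g3 : r3 = 2 := by clear h4 h5 h6 h7 h8 h9; omega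
      have g4 : r4 = 3 := by clear h3 h5 h6 h7 h8 h9; omega
      have g5 : r5 = 6 := by clear h3 h4 h6 h7 h8 h9; omega
      have g6 : r6 = 7 := by clear h3 h4 h5 h7 h8 h9; omega
      have g7 : r7 = 6 := by clear h3 h4 h5 h6 h8 h9; omega
      have g8 : r8 = 7 := by clear h3 h4 h5 h6 h7 h9; omega
      have g9 : r9 = 9 := by clear h3 h4 h5 h6 h7 h8; omega
      clear h3
      clear h4
      clear h5
      clear h6
      clear h7
      clear h8
      clear h9
      exact Or.inl (by omega)
    · have g3 : r3 = 3 := by clear h4 h5 h6 h7 h8 h9; omega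
      have g4 : r4 = 4 := by clear h3 h5 h6 h7 h8 h9; omega
      have g5 : r5 = 7 := by clear h3 h4 h6 h7 h8 h9; omega
      have g6 : r6 = 8 := by clear h3 h4 h5 h7 h8 h9; omega
      have g7 : r7 = 8 := by clear h3 h4 h5 h6 h8 h9; omega
      have g8 : r8 = 9 := by clear h3 h4 h5 h6 h7 h9; omega
      clear h3
      clear h4
      clear h5
      clear h6
      clear h7
      clear h8
      exact Or.inr (Or.inr (Or.inl (by omega)))
    · have g3 : r3 = u - 2 := by clear h4 h5 h6 h7 h8 h9; omega
      have g4 : r4 = u - 1 := by clear h3 h5 h6 h7 h8 h9; omega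
      have g5 : r5 = u + 2 := by clear h3 h4 h6 h7 h8 h9; omega
      have g6 : r6 = u + 3 := by clear h3 h4 h5 h7 h8 h9; omega
      clear h3
      clear h4
      clear h5
      clear h6
      exact Or.inr (Or.inr (Or.inr (Or.inr (by omega))))
    · have g3 : r3 = β - 5 := by clear h4 h5 h6 h7 h8 h9; omega
      have g4 : r4 = β - 4 := by clear h3 h5 h6 h7 h8 h9; omega
      have g5 : r5 = β - 1 := by clear h3 h4 h6 h7 h8 h9; omega
      have g6 : r6 = 0 := by clear h3 h4 h5 h7 h8 h9; omega
      have g7 : r7 = β - 8 := by clear h3 h4 h5 h6 h8 h9; omega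
      have g8 : r8 = β - 7 := by clear h3 h4 h5 h6 h7 h9; omega
      have g9 : r9 = β - 5 := by clear h3 h4 h5 h6 h7 h8; omega
      clear h3
      clear h4
      clear h5
      clear h6
      clear h7
      clear h8
      clear h9
      exact Or.inr (Or.inr (Or.inr (Or.inl (by omega))))
    · have g3 : r3 = β - 4 := by clear h4 h5 h6 h7 h8 h9; omega
      have g4 : r4 = β - 3 := by clear h3 h5 h6 h7 h8 h9; omega
      have g5 : r5 = 0 := by clear h3 h4 h6 h7 h8 h9; omega
      have g6 : r6 = 1 := by clear h3 h4 h5 h7 h8 h9; omega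
      have g7 : r7 = β - 6 := by clear h3 h4 h5 h6 h8 h9; omega
      have g8 : r8 = β - 5 := by clear h3 h4 h5 h6 h7 h9; omega
      have g9 : r9 = β - 3 := by clear h3 h4 h5 h6 h7 h8; omega
      clear h3
      clear h4
      clear h5
      clear h6
      clear h7
      clear h8
      clear h9
      exact Or.inr (Or.inr (Or.inr (Or.inr (by omega))))
    · have g3 : r3 = β - 3 := by clear h4 h5 h6 h7 h8 h9; omega
      have g4 : r4 = β - 2 := by clear h3 h5 h6 h7 h8 h9; omega
      have g5 : r5 = 1 := by clear h3 h4 h6 h7 h8 h9; omega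
      have g6 : r6 = 2 := by clear h3 h4 h5 h7 h8 h9; omega
      have g7 : r7 = β - 4 := by clear h3 h4 h5 h6 h8 h9; omega
      have g8 : r8 = β - 3 := by clear h3 h4 h5 h6 h7 h9; omega
      have g9 : r9 = β - 1 := by clear h3 h4 h5 h6 h7 h8; omega
      clear h3
      clear h4
      clear h5
      clear h6
      clear h7
      clear h8
      clear h9
      exact Or.inl (by omega)

/-- For each even `t ≥ 6` and each `β ≥ 10`, the set
`L'_t = {0, 2, 3, t − 2, t − 1, t + 2, t + 3, 2t − 2, 2t − 1, 2t + 1}` contains an element whose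
remainder modulo `β` differs from the remainders of all other elements of the set. -/
theorem Lp_unique_remainder (t : ℕ) (ht : 6 ≤ t) (hte : Even t) (β : ℕ) (hβ : 10 ≤ β) :
    ∃ a ∈ ({0, 2, 3, t - 2, t - 1, t + 2, t + 3, 2 * t - 2, 2 * t - 1, 2 * t + 1} : Finset ℕ),
      ∀ b ∈ ({0, 2, 3, t - 2, t - 1, t + 2, t + 3, 2 * t - 2, 2 * t - 1, 2 * t + 1} : Finset ℕ),
        b ≠ a → b % β ≠ a % β := by
  have hβ0 : 0 < β := by omega
  set u := t % β with hu
  have hult : u < β := Nat.mod_lt _ hβ0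
  have hm : t ≡ u + β [MOD β] := ((Nat.mod_modEq t β).symm).trans (Nat.add_mod_right u β).symm
  have hm2 : 2 * t ≡ 2 * u + β [MOD β] := by
    have h2u : 2 * t ≡ 2 * u [MOD β] := (Nat.mod_modEq t β).symm.mul_left 2
    exact h2u.trans (Nat.add_mod_right (2 * u) β).symm
  have e3 : (t - 2) % β = (u + β - 2) % β :=
    modeq_sub_cancel β t (u + β) 2 (by omega) (by omega) hm
  have e4 : (t - 1) % β = (u + β - 1) % β :=
    modeq_sub_cancel β t (u + β) 1 (by omega) (by omega) hm
  have e5 : (t + 2) % β = (u + 2) % β := (Nat.mod_modEq t β).symm.add_right 2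
  have e6 : (t + 3) % β = (u + 3) % β := (Nat.mod_modEq t β).symm.add_right 3
  have e7 : (2 * t - 2) % β = (2 * u + β - 2) % β :=
    modeq_sub_cancel β (2 * t) (2 * u + β) 2 (by omega) (by omega) hm2
  have e8 : (2 * t - 1) % β = (2 * u + β - 1) % β :=
    modeq_sub_cancel β (2 * t) (2 * u + β) 1 (by omega) (by omega) hm2
  have e9 : (2 * t + 1) % β = (2 * u + 1) % β :=
    (Nat.mod_modEq t β).symm.mul_left 2 |>.add_right 1
  have h0 : (0 : ℕ) % β = 0 := Nat.zero_mod β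
  have h1 : (2 : ℕ) % β = 2 := Nat.mod_eq_of_lt (by omega)
  have h2 : (3 : ℕ) % β = 3 := Nat.mod_eq_of_lt (by omega)
  have h3 := mod_cases3 β (u + β - 2) hβ0 (by omega); rw [← e3] at h3
  have h4 := mod_cases3 β (u + β - 1) hβ0 (by omega); rw [← e4] at h4
  have h5 := mod_cases3 β (u + 2) hβ0 (by omega); rw [← e5] at h5
  have h6 := mod_cases3 β (u + 3) hβ0 (by omega); rw [← e6] at h6
  have h7 := mod_cases3 β (2 * u + β - 2) hβ0 (by omega); rw [← e7] at h7
  have h8 := mod_cases3 β (2 * u + β - 1) hβ0 (by omega); rw [← e8] at h8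
  have h9 := mod_cases3 β (2 * u + 1) hβ0 (by omega); rw [← e9] at h9
  obtain ⟨r3, hr3⟩ : ∃ r, (t - 2) % β = r := ⟨_, rfl⟩
  obtain ⟨r4, hr4⟩ : ∃ r, (t - 1) % β = r := ⟨_, rfl⟩
  obtain ⟨r5, hr5⟩ : ∃ r, (t + 2) % β = r := ⟨_, rfl⟩
  obtain ⟨r6, hr6⟩ : ∃ r, (t + 3) % β = r := ⟨_, rfl⟩
  obtain ⟨r7, hr7⟩ : ∃ r, (2 * t - 2) % β = r := ⟨_, rfl⟩
  obtain ⟨r8, hr8⟩ : ∃ r, (2 * t - 1) % β = r := ⟨_, rfl⟩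
  obtain ⟨r9, hr9⟩ : ∃ r, (2 * t + 1) % β = r := ⟨_, rfl⟩
  rw [hr3] at h3; rw [hr4] at h4; rw [hr5] at h5; rw [hr6] at h6
  rw [hr7] at h7; rw [hr8] at h8; rw [hr9] at h9
  clear e3 e4 e5 e6 e7 e8 e9 hm hm2
  have H := key β u r3 r4 r5 r6 r7 r8 r9 hβ hult h3 h4 h5 h6 h7 h8 h9
  clear h3 h4 h5 h6 h7 h8 h9 hult hu hte ht
  rcases H with H | H | H | H | H
  · refine ⟨0, by simp, ?_⟩
    intro b hb hbne
    simp only [Finset.mem_insert, Finset.mem_singleton] at hb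
    rcases hb with rfl | rfl | rfl | rfl | rfl | rfl | rfl | rfl | rfl | rfl
    · exact absurd rfl hbne
    · rw [h1, h0]; omega
    · rw [h2, h0]; omega
    · rw [hr3, h0]; omega
    · rw [hr4, h0]; omega
    · rw [hr5, h0]; omega
    · rw [hr6, h0]; omega
    · rw [hr7, h0]; omega
    · rw [hr8, h0]; omega
    · rw [hr9, h0]; omega
  · refine ⟨2, by simp, ?_⟩
    intro b hb hbne
    simp only [Finset.mem_insert, Finset.mem_singleton] at hb
    rcases hb with rfl | rfl | rfl | rfl | rfl | rfl | rfl | rfl | rfl | rfl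
    · rw [h0, h1]; omega
    · exact absurd rfl hbne
    · rw [h2, h1]; omega
    · rw [hr3, h1]; omega
    · rw [hr4, h1]; omega
    · rw [hr5, h1]; omega
    · rw [hr6, h1]; omega
    · rw [hr7, h1]; omega
    · rw [hr8, h1]; omega
    · rw [hr9, h1]; omega
  · refine ⟨t - 1, by simp, ?_⟩
    intro b hb hbne
    simp only [Finset.mem_insert, Finset.mem_singleton] at hb
    rcases hb with rfl | rfl | rfl | rfl | rfl | rfl | rfl | rfl | rfl | rfl
    · rw [h0, hr4]; omega
    · rw [h1, hr4]; omega
    · rw [h2, hr4]; omega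
    · rw [hr3, hr4]; omega
    · exact absurd rfl hbne
    · rw [hr5, hr4]; omega
    · rw [hr6, hr4]; omega
    · rw [hr7, hr4]; omega
    · rw [hr8, hr4]; omega
    · rw [hr9, hr4]; omega
  · refine ⟨t + 2, by simp, ?_⟩
    intro b hb hbne
    simp only [Finset.mem_insert, Finset.mem_singleton] at hb
    rcases hb with rfl | rfl | rfl | rfl | rfl | rfl | rfl | rfl | rfl | rfl
    · rw [h0, hr5]; omega
    · rw [h1, hr5]; omega
    · rw [h2, hr5]; omega
    · rw [hr3, hr5]; omega
    · rw [hr4, hr5]; omega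
    · exact absurd rfl hbne
    · rw [hr6, hr5]; omega
    · rw [hr7, hr5]; omega
    · rw [hr8, hr5]; omega
    · rw [hr9, hr5]; omega
  · refine ⟨t + 3, by simp, ?_⟩
    intro b hb hbne
    simp only [Finset.mem_insert, Finset.mem_singleton] at hb
    rcases hb with rfl | rfl | rfl | rfl | rfl | rfl | rfl | rfl | rfl | rfl
    · rw [h0, hr6]; omega
    · rw [h1, hr6]; omega
    · rw [h2, hr6]; omega
    · rw [hr3, hr6]; omega
    · rw [hr4, hr6]; omega
    · rw [hr5, hr6]; omega
    · exact absurd rfl hbne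
    · rw [hr7, hr6]; omega
    · rw [hr8, hr6]; omega
    · rw [hr9, hr6]; omega
end

section
/- For any even integer t ≥ 6 and any integer β ≥ 10, the polynomial Q_t(x) is not divisible in ℚ[x] by any polynomial V(x) ∈ ℚ[x] that has at least two nonzero terms and such that every exponent occurring with nonzero coefficient in V is divisible by β. -/
/-!
If every exponent of `V` is divisible by `β`, the coefficients of `V * W` with exponents in a
residue class modulo `β` only involve the coefficients of `W` in the same class. Hence `V ∣ Q`
forces `V` to divide the part of `Q` with exponents in any given class. When an exponent `e` of `Q`
is alone in its class, that part is the monomial `c Xᵉ`, and over a domain the divisors of a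
monomial are monomials (compare degree and trailing degree).

The exponents of `Q_t` are `a + b t` with `|a| ≤ 3` and `b ∈ {0, 1, 2}`. If `t - 1` shares its class
modulo `β ≥ 10` with another exponent, then `t ≡ c (mod β)` for some `c ∈ {0, 1, 3, 4, -2}`;
for `c ∈ {0, 3, 4}` the exponent `0` is alone in its class, for `c ∈ {1, -2}` the exponent `2` is.
-/

open Polynomial

/-- `Q_t(x) = 2x^{2t+1} − 2x^{2t−1} + 2x^{2t−2} + x^{t+3} − x^{t+2} + x^{t−1} − x^{t−2}
− 2x^3 + 2x^2 − 2`. -/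
noncomputable def Qpoly (t : ℕ) : Polynomial ℚ :=
  C 2 * X ^ (2 * t + 1) - C 2 * X ^ (2 * t - 1) + C 2 * X ^ (2 * t - 2) + X ^ (t + 3)
    - X ^ (t + 2) + X ^ (t - 1) - X ^ (t - 2) - C 2 * X ^ 3 + C 2 * X ^ 2 - C 2

namespace Polynomial

variable {R : Type*} [Semiring R]

noncomputable def filter (P : ℕ → Prop) [DecidablePred P] (p : R[X]) : R[X] :=
  ∑ n ∈ p.support with P n, monomial n (p.coeff n)

theorem coeff_filter (P : ℕ → Prop) [DecidablePred P] (p : R[X]) (n : ℕ) :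
    (p.filter P).coeff n = if P n then p.coeff n else 0 := by
  by_cases hn : P n <;> by_cases h0 : p.coeff n = 0 <;> simp [filter, coeff_monomial, hn, h0]

open Finset.HasAntidiagonal in
theorem filter_modEq_mul {β : ℕ} {V : R[X]} (hV : ∀ k ∈ V.support, β ∣ k) (W : R[X]) (r : ℕ) :
    (V * W).filter (· ≡ r [MOD β]) = V * W.filter (· ≡ r [MOD β]) := by
  ext n
  have key : ∀ x ∈ antidiagonal n, V.coeff x.1 * (W.filter (· ≡ r [MOD β])).coeff x.2
      = if n ≡ r [MOD β] then V.coeff x.1 * W.coeff x.2 else 0 := by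
    rintro ⟨i, j⟩ hij
    rw [mem_antidiagonal] at hij
    by_cases hi : V.coeff i = 0
    · simp [hi]
    have hnj : n ≡ j [MOD β] := by
      simpa [← hij] using (Nat.modEq_zero_iff_dvd.2 (hV i (mem_support_iff.2 hi))).add_right j
    have hjn : j ≡ r [MOD β] ↔ n ≡ r [MOD β] := ⟨hnj.trans, hnj.symm.trans⟩
    simp only [coeff_filter, hjn, mul_ite, mul_zero]
  rw [coeff_filter, coeff_mul, coeff_mul, Finset.sum_congr rfl key]
  split_ifs <;> simp

theorem dvd_filter_modEq_of_dvd {β : ℕ} {V Q : R[X]} (hV : ∀ k ∈ V.support, β ∣ k) (h : V ∣ Q)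
    (r : ℕ) : V ∣ Q.filter (· ≡ r [MOD β]) := by
  obtain ⟨W, rfl⟩ := h
  exact ⟨_, filter_modEq_mul hV W r⟩

theorem filter_eq_monomial {P : ℕ → Prop} [DecidablePred P] {p : R[X]} {e : ℕ} (he : P e)
    (h : ∀ n ∈ p.support, P n → n = e) : p.filter P = monomial e (p.coeff e) := by
  ext n
  rw [coeff_filter, coeff_monomial]
  by_cases hne : e = n
  · simp [← hne, he]
  by_cases hn : P n
  · rw [if_pos hn, if_neg hne, ← notMem_support_iff]
    exact fun hs => hne (h n hs hn).symm
  · rw [if_neg hn, if_neg hne]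

theorem card_support_le_one_of_dvd_monomial [NoZeroDivisors R] {V : R[X]} {e : ℕ} {c : R}
    (hc : c ≠ 0) (h : V ∣ monomial e c) : V.support.card ≤ 1 := by
  obtain ⟨W, hW⟩ := h
  have hVW : V ≠ 0 ∧ W ≠ 0 := by
    refine ⟨?_, ?_⟩ <;> rintro rfl <;> simp [hc] at hW
  have hdeg := natDegree_mul hVW.1 hVW.2
  have htrail := natTrailingDegree_mul hVW.1 hVW.2
  rw [← hW, natDegree_monomial_eq e hc] at hdeg
  rw [← hW, natTrailingDegree_monomial hc] at htrail
  have hVdeg := V.natTrailingDegree_le_natDegree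
  have hWdeg := W.natTrailingDegree_le_natDegree
  refine Finset.card_le_one.2 fun i hi j hj => ?_
  have := le_natDegree_of_mem_supp i hi
  have := le_natDegree_of_mem_supp j hj
  have := natTrailingDegree_le_of_mem_supp i hi
  have := natTrailingDegree_le_of_mem_supp j hj
  omega

theorem card_support_le_one_of_dvd_of_isolated [NoZeroDivisors R] {β e : ℕ} {V Q : R[X]}
    (hV : ∀ k ∈ V.support, β ∣ k) (h : V ∣ Q) (he : Q.coeff e ≠ 0)
    (hiso : ∀ n ∈ Q.support, n ≡ e [MOD β] → n = e) : V.support.card ≤ 1 :=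
  card_support_le_one_of_dvd_monomial he <|
    filter_eq_monomial (P := (· ≡ e [MOD β])) (Nat.ModEq.refl e) hiso ▸
      dvd_filter_modEq_of_dvd hV h e

end Polynomial

def Qexponents (t : ℕ) : Finset ℕ :=
  {0, 2, 3, t - 2, t - 1, t + 2, t + 3, 2 * t - 2, 2 * t - 1, 2 * t + 1}

theorem support_Qpoly_subset (t : ℕ) : (Qpoly t).support ⊆ Qexponents t := by
  intro n hn
  by_contra h
  simp only [Qexponents, Finset.mem_insert, Finset.mem_singleton, not_or] at h
  simp_all [Qpoly, coeff_X_pow, coeff_C]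

theorem coeff_Qpoly_ne_zero {t : ℕ} (ht : 6 ≤ t) :
    ∀ e ∈ ({0, 2, t - 1} : Finset ℕ), (Qpoly t).coeff e ≠ 0 := by
  simp only [Finset.mem_insert, Finset.mem_singleton]
  rintro e (rfl | rfl | rfl) <;> simp [Qpoly, coeff_X_pow, coeff_C] <;> split_ifs <;> norm_num <;>
    omega

theorem Int.eq_zero_or_natAbs_le_of_dvd {b d : ℤ} (h : b ∣ d) : d = 0 ∨ b.natAbs ≤ d.natAbs :=
  or_iff_not_imp_left.2 (Int.natAbs_le_of_dvd_ne_zero h)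

theorem Qexponents_isolated_of_dvd_sub {t β e : ℕ} {c : ℤ} (hβ : 10 ≤ β)
    (hc : (β : ℤ) ∣ t - c)
    (hce : e = 0 ∧ c ∈ ({0, 3, 4} : Finset ℤ) ∨ e = 2 ∧ c ∈ ({1, -2} : Finset ℤ)) :
    ∀ n ∈ Qexponents t, n ≡ e [MOD β] → n = e := by
  intro n hn hne
  rw [Nat.modEq_iff_dvd] at hne
  -- for `n = a + b t`, the integer `e - n + b (t - c) = e - a - b c` is divisible by `β` and small
  have h0 := Int.eq_zero_or_natAbs_le_of_dvd hne
  have h1 := Int.eq_zero_or_natAbs_le_of_dvd (dvd_add hne hc)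
  have h2 := Int.eq_zero_or_natAbs_le_of_dvd (dvd_add hne (hc.mul_left 2))
  simp only [Qexponents, Finset.mem_insert, Finset.mem_singleton] at hn hce
  simp only [Int.natAbs_natCast] at h0 h1 h2
  omega

theorem Qexponents_isolated_of_not_dvd_sub {t β : ℕ} (ht : 1 ≤ t) (hβ : 10 ≤ β)
    (hc : ∀ c ∈ ({0, 1, 3, 4, -2} : Finset ℤ), ¬ (β : ℤ) ∣ t - c) :
    ∀ n ∈ Qexponents t, n ≡ t - 1 [MOD β] → n = t - 1 := by
  intro n hn hne
  rw [Nat.modEq_iff_dvd] at hne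
  have h1 : 1 + (n : ℤ) ∉ ({0, 1, 3, 4, -2} : Finset ℤ) := fun hm =>
    hc _ hm (by rwa [show (t : ℤ) - (1 + n) = ↑(t - 1) - n by omega])
  have h2 : 2 * (t : ℤ) - 1 - n ∉ ({0, 1, 3, 4, -2} : Finset ℤ) := fun hm =>
    hc _ hm (by rwa [show (t : ℤ) - (2 * t - 1 - n) = -(↑(t - 1) - n) by omega, dvd_neg])
  have h0 := Int.eq_zero_or_natAbs_le_of_dvd hne
  simp only [Qexponents, Finset.mem_insert, Finset.mem_singleton] at hn h1 h2
  simp only [Int.natAbs_natCast] at h0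
  omega

theorem exists_isolated_Qexponent {t β : ℕ} (ht : 1 ≤ t) (hβ : 10 ≤ β) :
    ∃ e ∈ ({0, 2, t - 1} : Finset ℕ), ∀ n ∈ Qexponents t, n ≡ e [MOD β] → n = e := by
  by_cases hA : ∃ c ∈ ({0, 3, 4} : Finset ℤ), (β : ℤ) ∣ t - c
  · obtain ⟨c, hc, hct⟩ := hA
    exact ⟨0, by simp, Qexponents_isolated_of_dvd_sub hβ hct (.inl ⟨rfl, hc⟩)⟩
  by_cases hB : ∃ c ∈ ({1, -2} : Finset ℤ), (β : ℤ) ∣ t - c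
  · obtain ⟨c, hc, hct⟩ := hB
    exact ⟨2, by simp, Qexponents_isolated_of_dvd_sub hβ hct (.inr ⟨rfl, hc⟩)⟩
  refine ⟨t - 1, by simp, Qexponents_isolated_of_not_dvd_sub ht hβ fun c hc hct => ?_⟩
  simp only [Finset.mem_insert, Finset.mem_singleton] at hc
  rcases hc with rfl | rfl | rfl | rfl | rfl
  exacts [hA ⟨0, by simp, hct⟩, hB ⟨1, by simp, hct⟩, hA ⟨3, by simp, hct⟩, hA ⟨4, by simp, hct⟩,
    hB ⟨-2, by simp, hct⟩]

theorem Qpoly_not_dvd_by_beta_lacunary_general (t : ℕ) (ht : 6 ≤ t) (β : ℕ)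
    (hβ : 10 ≤ β) (V : Polynomial ℚ) (hV : 2 ≤ V.support.card)
    (hexp : ∀ k ∈ V.support, β ∣ k) :
    ¬ V ∣ Qpoly t := by
  intro hdvd
  obtain ⟨e, he, hiso⟩ := exists_isolated_Qexponent (by omega : 1 ≤ t) hβ
  have := card_support_le_one_of_dvd_of_isolated hexp hdvd (coeff_Qpoly_ne_zero ht e he)
    fun n hn => hiso n (support_Qpoly_subset t hn)
  omega

/-- For even `t ≥ 6` and `β ≥ 10`, `Q_t` is not divisible by any rational polynomial with at
least two nonzero terms all of whose exponents are divisible by `β`. -/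
theorem Qpoly_not_dvd_by_beta_lacunary (t : ℕ) (ht : 6 ≤ t) (hte : Even t) (β : ℕ)
    (hβ : 10 ≤ β) (V : Polynomial ℚ) (hV : 2 ≤ V.support.card)
    (hexp : ∀ k ∈ V.support, β ∣ k) :
    ¬ V ∣ Qpoly t :=
  Qpoly_not_dvd_by_beta_lacunary_general t ht β hβ V hV hexp
end

section
/- For each even integer t ≥ 6 and each positive integer b, if the cyclotomic polynomial Φ_b(x) divides Q_t(x), then p² does not divide b for any prime p ≥ 11, and moreover 7³ ∤ b, 5³ ∤ b, 3⁴ ∤ b, and 2² ∤ b. -/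
open Polynomial

/-!
Write `Q_t = 2 A + B` with `B = x^{t+3} - x^{t+2} + x^{t-1} - x^{t-2}`; the exponents of `B`
differ from `t + 3` by `1, 4, 5`. Every primitive `b`-th root of unity `ζ` is a root of `Q_t`.

If `b = M m` with `M ∣ m^j`, then the `ζ ν^s` (`ν = ζ^m` a primitive `M`-th root of unity) are
again primitive `b`-th roots, and the average of `ν^{cs} Q_t(ζ ν^s)` over `s` keeps only the
monomials with exponent in one class mod `M`. For `M ∤ 1, 4, 5` the class of `t + 3` yields
`ζ^{t+3} ∈ 2 ℤ̄`, impossible as `1/2` is not an algebraic integer. This excludes `p² ∣ b` for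
`p ≥ 7` (`M = p`), `5³ ∣ b` (`M = 25`) and `3² ∣ b` (`M = 3`).

If `4 ∣ b`, then `-ζ` is a root as well; the odd part of `Q_t` (`t` even) gives
`1 + ζ⁴ ∈ 2 ℤ̄`. Squaring repeatedly gives `1 + ω^{2^k} ∈ 2 ℤ̄` for `ω = ζ⁴`, and for `ω` of odd
order `n > 1` the telescoping product `∏_{k < φ(n)} (1 + ω^{2^k}) = 1` then puts `1/2` in `ℤ̄`;
order `4` is excluded by `((1 + i)/2)² = i/2`. So `ω` has order `1` or `2`, i.e. `b ∈ {4, 8}`,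
and these two cases are checked by hand.
-/

open Finset

theorem IsIntegral.of_mul_of_pow_eq_one {A : Type*} [CommRing A] {x y : A} {n : ℕ} (hn : 0 < n)
    (hy : y ^ n = 1) (h : IsIntegral ℤ (y * x)) : IsIntegral ℤ x := by
  have hyint : IsIntegral ℤ y := IsIntegral.of_pow hn (hy ▸ isIntegral_one)
  have : x = y ^ (n - 1) * (y * x) := by
    rw [← mul_assoc, ← pow_succ, Nat.sub_add_cancel hn, hy, one_mul]
  exact this ▸ (hyint.pow _).mul h

theorem mul_prod_one_add_pow_two_pow {R : Type*} [CommRing R] (x : R) (d : ℕ) :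
    (1 - x) * ∏ k ∈ range d, (1 + x ^ 2 ^ k) = 1 - x ^ 2 ^ d := by
  induction d with
  | zero => simp
  | succ d ih => rw [prod_range_succ, ← mul_assoc, ih, pow_succ, pow_mul]; ring

theorem Nat.coprime_one_add_mul_mul {M m j : ℕ} (hMm : M ∣ m ^ j) (s : ℕ) :
    Nat.Coprime (1 + s * m) (M * m) := by
  have hm : Nat.Coprime (1 + s * m) m := by simp [Nat.coprime_add_mul_right_left]
  exact Nat.Coprime.mul_right ((hm.pow_right j).coprime_dvd_right hMm) hm

theorem IsPrimitiveRoot.sum_pow_mul_mul_pow {K : Type*} [Field K] {ν : K} {M : ℕ}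
    (hν : IsPrimitiveRoot ν M) (ζ : K) (c e : ℕ) :
    ∑ s ∈ range M, ν ^ (c * s) * (ζ * ν ^ s) ^ e = M * if M ∣ c + e then ζ ^ e else 0 := by
  have hterm : ∀ s, ν ^ (c * s) * (ζ * ν ^ s) ^ e = ζ ^ e * (ν ^ (c + e)) ^ s := fun s => by ring
  simp_rw [hterm, ← mul_sum]
  split_ifs with hdvd
  · simp [(hν.pow_eq_one_iff_dvd _).mpr hdvd, mul_comm]
  · have hne : ν ^ (c + e) ≠ 1 := mt (hν.pow_eq_one_iff_dvd _).mp hdvd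
    rw [geom_sum_eq hne, pow_right_comm, hν.pow_eq_one]
    simp

section CharZero

variable {K : Type*} [Field K] [CharZero K]

theorem not_isIntegral_inv_two : ¬ IsIntegral ℤ (2⁻¹ : K) := by
  intro h
  have hℚ : IsIntegral ℤ (2⁻¹ : ℚ) := by
    rw [← isIntegral_algebraMap_iff (algebraMap ℚ K).injective]
    simpa using h
  obtain ⟨z, hz⟩ := IsIntegrallyClosed.isIntegral_iff.mp hℚ
  have : (2 * z : ℚ) = 1 := by rw [show (z : ℚ) = 2⁻¹ from hz]; norm_num
  have : 2 * z = 1 := by exact_mod_cast this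
  omega

theorem not_isIntegral_div_two_of_pow_eq_one {x : K} {n : ℕ} (hn : 0 < n) (hx : x ^ n = 1) :
    ¬ IsIntegral ℤ (x / 2) := fun h =>
  not_isIntegral_inv_two (IsIntegral.of_mul_of_pow_eq_one hn hx (div_eq_mul_inv x 2 ▸ h))

theorem IsIntegral.one_add_pow_two_pow_div_two {x : K} (hx : IsIntegral ℤ x)
    (h : IsIntegral ℤ ((1 + x) / 2)) (k : ℕ) : IsIntegral ℤ ((1 + x ^ 2 ^ k) / 2) := by
  induction k with
  | zero => simpa using h
  | succ k ih =>
    have : (1 + x ^ 2 ^ (k + 1)) / 2 = 2 * ((1 + x ^ 2 ^ k) / 2) ^ 2 - x ^ 2 ^ k := by ring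
    rw [this]
    exact (((isIntegral_natCast 2).mul (ih.pow 2)).sub (hx.pow _) : IsIntegral ℤ _)

theorem not_isIntegral_one_add_div_two_of_sq_eq_neg_one {V : K} (hV : V ^ 2 = -1) :
    ¬ IsIntegral ℤ ((1 + V) / 2) := by
  intro h
  have hV4 : V ^ 4 = 1 := by linear_combination (V ^ 2 - 1) * hV
  have hVint : IsIntegral ℤ V := IsIntegral.of_pow (by norm_num) (hV4 ▸ isIntegral_one)
  -- `((1 + V) / 2) ^ 2 = V / 2`
  have : (2⁻¹ : K) = ((1 + V) / 2) ^ 2 * V ^ 3 := by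
    linear_combination (-(V ^ 3 + 2 * V ^ 2 - 2) / 4) * hV
  exact not_isIntegral_inv_two (this ▸ (h.pow 2).mul (hVint.pow 3))

theorem IsPrimitiveRoot.not_isIntegral_one_add_div_two_of_odd {W : K} {n : ℕ}
    (hW : IsPrimitiveRoot W n) (hn : Odd n) (hn1 : n ≠ 1) : ¬ IsIntegral ℤ ((1 + W) / 2) := by
  intro h
  set d := n.totient
  have hd : 0 < d := Nat.totient_pos.mpr hn.pos
  have hWd : W ^ 2 ^ d = W := by
    have h2d : 2 ^ d % n = 1 % n := Nat.ModEq.pow_totient (Nat.coprime_two_left.mpr hn)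
    rw [← pow_mod_orderOf, ← hW.eq_orderOf, h2d, hW.eq_orderOf, pow_mod_orderOf, pow_one]
  have hW1 : 1 - W ≠ 0 := sub_ne_zero.mpr (hW.ne_one (by have := hn.pos; omega)).symm
  have hprod : ∏ k ∈ range d, (1 + W ^ 2 ^ k) = 1 := by
    have := mul_prod_one_add_pow_two_pow W d
    rw [hWd] at this
    exact (mul_eq_left₀ hW1).mp this
  have hhalf : (2⁻¹ : K) = 2 ^ (d - 1) * ∏ k ∈ range d, (1 + W ^ 2 ^ k) / 2 := by
    rw [prod_div_distrib, hprod, prod_const, card_range, ← Nat.sub_add_cancel hd, pow_succ]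
    field_simp
    simp
  have hWint := hW.isIntegral hn.pos
  refine not_isIntegral_inv_two (hhalf ▸ ((isIntegral_natCast 2).pow _).mul ?_)
  exact IsIntegral.prod _ fun k _ => hWint.one_add_pow_two_pow_div_two h k

theorem IsPrimitiveRoot.dvd_two_of_isIntegral_one_add_div_two {ω : K} {n : ℕ}
    (hω : IsPrimitiveRoot ω n) (hn : 0 < n) (h : IsIntegral ℤ ((1 + ω) / 2)) : n ∣ 2 := by
  have hpow := (hω.isIntegral hn).one_add_pow_two_pow_div_two h
  obtain ⟨a, n', hn', rfl⟩ := Nat.exists_eq_two_pow_mul_odd hn.ne'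
  obtain rfl | hn'1 := eq_or_ne n' 1
  · simp only [mul_one] at hω hn ⊢
    obtain ha | ha := Nat.lt_or_ge a 2
    · exact (pow_dvd_pow 2 (by omega)).trans (pow_one 2).dvd
    have hV : IsPrimitiveRoot (ω ^ 2 ^ (a - 1)) 2 :=
      hω.pow hn (by rw [← pow_succ, Nat.sub_add_cancel (by omega)])
    refine absurd (hpow (a - 2)) (not_isIntegral_one_add_div_two_of_sq_eq_neg_one ?_)
    rw [← pow_mul, ← pow_succ, show a - 2 + 1 = a - 1 by omega, hV.eq_neg_one_of_two_right]
  · exact absurd (hpow a) ((hω.pow hn rfl).not_isIntegral_one_add_div_two_of_odd hn' hn'1)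

theorem IsPrimitiveRoot.aeval_pow_eq_zero_of_cyclotomic_dvd {ζ : K} {n k : ℕ}
    (hζ : IsPrimitiveRoot ζ n) (hn : 0 < n) {P : ℚ[X]} (hdvd : cyclotomic n ℚ ∣ P)
    (hk : k.Coprime n) : aeval (ζ ^ k) P = 0 := by
  refine aeval_eq_zero_of_dvd_aeval_eq_zero hdvd ?_
  rw [cyclotomic_eq_minpoly_rat (hζ.pow_of_coprime k hk) hn]
  exact minpoly.aeval ℚ _

theorem aeval_Qpoly (t : ℕ) (z : K) :
    aeval z (Qpoly t) =
      2 * (z ^ (2 * t + 1) - z ^ (2 * t - 1) + z ^ (2 * t - 2) - z ^ 3 + z ^ 2 - 1)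
        + (z ^ (t + 3) - z ^ (t + 2) + z ^ (t - 1) - z ^ (t - 2)) := by
  simp [Qpoly]; ring

theorem not_forall_aeval_Qpoly_pow_one_add_mul_eq_zero {t M m : ℕ} (ht : 2 ≤ t)
    (hMm : 0 < M * m) (h1 : ¬ M ∣ 1) (h4 : ¬ M ∣ 4) (h5 : ¬ M ∣ 5) {ζ : K}
    (hζ : IsPrimitiveRoot ζ (M * m)) : ¬ ∀ s, aeval (ζ ^ (1 + s * m)) (Qpoly t) = 0 := by
  intro hQ
  have hν : IsPrimitiveRoot (ζ ^ m) M := hζ.pow hMm (mul_comm M m)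
  have hM : M ≠ 0 := left_ne_zero_of_mul hMm.ne'
  -- the filter below keeps the exponents `e ≡ t + 3 [MOD M]`
  set c := (M - 1) * (t + 3)
  have hc : c + (t + 3) = M * (t + 3) := by
    rw [← Nat.succ_mul, Nat.succ_eq_add_one, Nat.sub_add_cancel (Nat.one_le_iff_ne_zero.mpr hM)]
  let G : ℕ → K := fun e => if M ∣ c + e then ζ ^ e else 0
  have hGint : ∀ e, IsIntegral ℤ (G e) := fun e => by
    unfold G; split_ifs
    exacts [(hζ.isIntegral hMm).pow e, isIntegral_zero]
  have hG0 : ∀ e d, c + e + d = M * (t + 3) → ¬ M ∣ d → G e = 0 := fun e d hed hd =>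
    if_neg fun he => hd ((Nat.dvd_add_right he).mp (hed ▸ dvd_mul_right M _))
  have hsum : ∑ s ∈ range M, (ζ ^ m) ^ (c * s) * aeval (ζ * (ζ ^ m) ^ s) (Qpoly t) =
      M * (2 * (G (2 * t + 1) - G (2 * t - 1) + G (2 * t - 2) - G 3 + G 2 - G 0)
        + (G (t + 3) - G (t + 2) + G (t - 1) - G (t - 2))) := by
    simp only [G, mul_add, mul_sub, mul_left_comm _ (2 : K), ← hν.sum_pow_mul_mul_pow,
      mul_sum, ← sum_sub_distrib, ← sum_add_distrib]
    refine sum_congr rfl fun s _ => ?_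
    rw [aeval_Qpoly]; ring
  have hzero : ∑ s ∈ range M, (ζ ^ m) ^ (c * s) * aeval (ζ * (ζ ^ m) ^ s) (Qpoly t) = 0 :=
    sum_eq_zero fun s _ => by
      rw [show ζ * (ζ ^ m) ^ s = ζ ^ (1 + s * m) by ring, hQ s, mul_zero]
  rw [hzero, hG0 (t + 2) 1 (by omega) h1, hG0 (t - 1) 4 (by omega) h4,
    hG0 (t - 2) 5 (by omega) h5, show G (t + 3) = ζ ^ (t + 3) from
      if_pos (hc ▸ dvd_mul_right M _)] at hsum
  have hsection := (mul_eq_zero.mp hsum.symm).resolve_left (Nat.cast_ne_zero.mpr hM)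
  refine not_isIntegral_div_two_of_pow_eq_one hMm (x := ζ ^ (t + 3)) ?_ ?_
  · rw [← pow_mul, mul_comm, pow_mul, hζ.pow_eq_one, one_pow]
  · have : ζ ^ (t + 3) / 2 =
        -(G (2 * t + 1) - G (2 * t - 1) + G (2 * t - 2) - G 3 + G 2 - G 0) := by
      linear_combination hsection / 2
    rw [this]
    exact (((((hGint _).sub (hGint _)).add (hGint _)).sub (hGint _)).add (hGint _) |>.sub
      (hGint _)).neg

theorem pow_mul_one_add_pow_four_of_aeval_Qpoly {t : ℕ} (ht : 2 ≤ t) (hte : Even t) {z : K}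
    (h : aeval z (Qpoly t) = 0) (hneg : aeval (-z) (Qpoly t) = 0) :
    z ^ (t - 1) * (1 + z ^ 4) = 2 * (z ^ 3 + z ^ (2 * t - 1) - z ^ (2 * t + 1)) := by
  obtain ⟨k, rfl⟩ : ∃ k, t = 2 * k + 2 := ⟨t / 2 - 1, by obtain ⟨r, rfl⟩ := hte; omega⟩
  rw [aeval_Qpoly] at h hneg
  simp only [show 2 * (2 * k + 2) - 1 = 4 * k + 3 by omega,
    show 2 * (2 * k + 2) - 2 = 4 * k + 2 by omega, show 2 * k + 2 - 1 = 2 * k + 1 by omega,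
    show 2 * k + 2 - 2 = 2 * k by omega] at h hneg ⊢
  simp only [neg_pow z, pow_add (-1 : K), pow_mul (-1 : K)] at hneg
  norm_num at hneg
  linear_combination (h - hneg) / 2

theorem pow_mul_one_add_pow_four_ne {t : ℕ} (ht : 2 ≤ t) (hte : Even t) {ζ : K}
    (hζ : ζ ^ 2 = -1 ∨ ζ ^ 4 = -1) :
    ζ ^ (t - 1) * (1 + ζ ^ 4) ≠ 2 * (ζ ^ 3 + ζ ^ (2 * t - 1) - ζ ^ (2 * t + 1)) := by
  obtain ⟨k, rfl⟩ : ∃ k, t = 2 * k + 2 := ⟨t / 2 - 1, by obtain ⟨r, rfl⟩ := hte; omega⟩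
  have hζ0 : ζ ≠ 0 := by rintro rfl; norm_num at hζ
  rw [show 2 * k + 2 - 1 = 2 * k + 1 by omega, show 2 * (2 * k + 2) - 1 = 4 * k + 3 by omega,
    show 2 * (2 * k + 2) + 1 = 4 * k + 5 by omega]
  intro hrel
  rcases hζ with h2 | h4
  · rw [show 4 * k + 3 = 2 * (2 * k + 1) + 1 by ring, show 4 * k + 5 = 2 * (2 * k + 2) + 1 by ring,
      show ζ ^ 4 = (ζ ^ 2) ^ 2 by ring, show ζ ^ 3 = ζ ^ 2 * ζ by ring] at hrel
    simp only [pow_add, pow_mul, h2] at hrel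
    rcases neg_one_pow_eq_or K k with hk | hk <;> simp only [hk] at hrel
    · exact hζ0 (by linear_combination hrel / 8)
    · exact hζ0 (by linear_combination hrel / 4)
  · rw [h4] at hrel
    simp only [pow_add, pow_mul, h4] at hrel
    rcases neg_one_pow_eq_or K k with hk | hk <;> rw [hk] at hrel
    · have : (5 : K) = 0 := by
        linear_combination (ζ * (2 + ζ ^ 2) / 2) * hrel - (ζ ^ 4 - 5) * h4
      norm_num at this
    · exact hζ0 (pow_eq_zero_iff (n := 5) (by norm_num) |>.mp (by linear_combination -hrel / 2))

theorem not_forall_aeval_Qpoly_pow_one_add_two_mul_eq_zero {t c : ℕ} (ht : 2 ≤ t)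
    (hte : Even t) (hc : 0 < c) {ζ : K} (hζ : IsPrimitiveRoot ζ (2 * (2 * c))) :
    ¬ ∀ s, aeval (ζ ^ (1 + s * (2 * c))) (Qpoly t) = 0 := by
  intro hQ
  have hneg : ζ ^ (2 * c) = -1 := (hζ.pow (by omega) (mul_comm _ _)).eq_neg_one_of_two_right
  have hrel := pow_mul_one_add_pow_four_of_aeval_Qpoly ht hte (by simpa using hQ 0)
    (by simpa [pow_add, hneg] using hQ 1)
  have hζint := hζ.isIntegral (by omega)
  have hint : IsIntegral ℤ ((1 + ζ ^ 4) / 2) := by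
    refine IsIntegral.of_mul_of_pow_eq_one (y := ζ ^ (t - 1)) (n := 2 * (2 * c)) (by omega)
      (by rw [← pow_mul, mul_comm, pow_mul, hζ.pow_eq_one, one_pow]) ?_
    rw [← mul_div_assoc, hrel, mul_div_cancel_left₀ _ two_ne_zero]
    exact ((hζint.pow _).add (hζint.pow _)).sub (hζint.pow _)
  have hc2 : c ∣ 2 :=
    (hζ.pow (by omega) (by ring)).dvd_two_of_isIntegral_one_add_div_two hc hint
  refine pow_mul_one_add_pow_four_ne ht hte ?_ hrel
  rcases (Nat.dvd_prime Nat.prime_two).mp hc2 with rfl | rfl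
  exacts [.inl hneg, .inr hneg]

end CharZero

theorem cyclotomic_not_dvd_Qpoly {t M m j : ℕ} (ht : 2 ≤ t) (hMm : 0 < M * m) (h1 : ¬ M ∣ 1)
    (h4 : ¬ M ∣ 4) (h5 : ¬ M ∣ 5) (hM : M ∣ m ^ j) : ¬ cyclotomic (M * m) ℚ ∣ Qpoly t :=
  fun hdvd =>
    have hζ := Complex.isPrimitiveRoot_exp _ hMm.ne'
    not_forall_aeval_Qpoly_pow_one_add_mul_eq_zero ht hMm h1 h4 h5 hζ fun s =>
      hζ.aeval_pow_eq_zero_of_cyclotomic_dvd hMm hdvd (Nat.coprime_one_add_mul_mul hM s)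

theorem cyclotomic_two_mul_two_mul_not_dvd_Qpoly {t c : ℕ} (ht : 2 ≤ t) (hte : Even t)
    (hc : 0 < c) : ¬ cyclotomic (2 * (2 * c)) ℚ ∣ Qpoly t :=
  fun hdvd =>
    have hb : 0 < 2 * (2 * c) := by omega
    have hζ := Complex.isPrimitiveRoot_exp _ hb.ne'
    not_forall_aeval_Qpoly_pow_one_add_two_mul_eq_zero ht hte hc hζ fun s =>
      hζ.aeval_pow_eq_zero_of_cyclotomic_dvd hb hdvd
        (Nat.coprime_one_add_mul_mul (j := 1) (by simp) s)

/-- If `Φ_b ∣ Q_t` for even `t ≥ 6` and `b ≥ 1`, then `p² ∤ b` for every prime `p ≥ 11`, and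
`7³ ∤ b`, `5³ ∤ b`, `3⁴ ∤ b`, `2² ∤ b`. -/
theorem cyclotomic_dvd_Qpoly_constraints (t : ℕ) (ht : 6 ≤ t) (hte : Even t) (b : ℕ)
    (hb : 0 < b) (hdvd : cyclotomic b ℚ ∣ Qpoly t) :
    (∀ p : ℕ, p.Prime → 11 ≤ p → ¬ p ^ 2 ∣ b) ∧
      ¬ 7 ^ 3 ∣ b ∧ ¬ 5 ^ 3 ∣ b ∧ ¬ 3 ^ 4 ∣ b ∧ ¬ 2 ^ 2 ∣ b := by
  refine ⟨?_, ?_, ?_, ?_, ?_⟩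
  · rintro p - hp ⟨c, rfl⟩
    rw [sq, mul_assoc] at hb hdvd
    exact cyclotomic_not_dvd_Qpoly (j := 1) (by omega) hb
      (Nat.not_dvd_of_pos_of_lt (by norm_num) (by omega))
      (Nat.not_dvd_of_pos_of_lt (by norm_num) (by omega))
      (Nat.not_dvd_of_pos_of_lt (by norm_num) (by omega)) ⟨c, by ring⟩ hdvd
  · rintro ⟨c, rfl⟩
    rw [show 7 ^ 3 * c = 7 * (7 ^ 2 * c) by ring] at hb hdvd
    exact cyclotomic_not_dvd_Qpoly (j := 1) (by omega) hb (by norm_num) (by norm_num)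
      (by norm_num) ⟨7 * c, by ring⟩ hdvd
  · rintro ⟨c, rfl⟩
    rw [show 5 ^ 3 * c = 25 * (5 * c) by ring] at hb hdvd
    exact cyclotomic_not_dvd_Qpoly (j := 2) (by omega) hb (by norm_num) (by norm_num)
      (by norm_num) ⟨c ^ 2, by ring⟩ hdvd
  · rintro ⟨c, rfl⟩
    rw [show 3 ^ 4 * c = 3 * (3 ^ 3 * c) by ring] at hb hdvd
    exact cyclotomic_not_dvd_Qpoly (j := 1) (by omega) hb (by norm_num) (by norm_num)
      (by norm_num) ⟨9 * c, by ring⟩ hdvd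
  · rintro ⟨c, rfl⟩
    rw [show 2 ^ 2 * c = 2 * (2 * c) by ring] at hb hdvd
    exact cyclotomic_two_mul_two_mul_not_dvd_Qpoly (by omega) hte (by omega) hdvd
end

section
/- For each even integer t ≥ 6 and each prime number p ≥ 11, neither Φ_p(x) nor Φ_{2p}(x) divides Q_t(x); and for each even integer t ≥ 6 and each prime number p ≥ 13, neither Φ_p(x) nor Φ_{2p}(x) divides R_t(x). -/
open Polynomial

/-- `R_t(x) = 2x^{2t+1} − 2x^{2t−1} + 2x^{2t−2} − x^{t+3} + x^{t+2} − 4x^{t+1} + 4x^t − x^{t−1}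
+ x^{t−2} − 2x^3 + 2x^2 − 2`. -/
noncomputable def Rpoly (t : ℕ) : Polynomial ℚ :=
  C 2 * X ^ (2 * t + 1) - C 2 * X ^ (2 * t - 1) + C 2 * X ^ (2 * t - 2) - X ^ (t + 3)
    + X ^ (t + 2) - C 4 * X ^ (t + 1) + C 4 * X ^ t - X ^ (t - 1) + X ^ (t - 2)
    - C 2 * X ^ 3 + C 2 * X ^ 2 - C 2

noncomputable def QZ (s : ℕ) : Polynomial ℤ :=
  C 2 * X ^ (2*s+13) - C 2 * X ^ (2*s+11) + C 2 * X ^ (2*s+10) + X ^ (s+9)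
    - X ^ (s+8) + X ^ (s+5) - X ^ (s+4) - C 2 * X ^ 3 + C 2 * X ^ 2 - C 2

noncomputable def RZ (s : ℕ) : Polynomial ℤ :=
  C 2 * X ^ (2*s+13) - C 2 * X ^ (2*s+11) + C 2 * X ^ (2*s+10) - X ^ (s+9)
    + X ^ (s+8) - C 4 * X ^ (s+7) + C 4 * X ^ (s+6) - X ^ (s+5) + X ^ (s+4)
    - C 2 * X ^ 3 + C 2 * X ^ 2 - C 2


lemma Qmap (s : ℕ) : Qpoly (s + 6) = (QZ s).map (Int.castRingHom ℚ) := by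
  have e1 : 2 * (s + 6) + 1 = 2*s+13 := by omega
  have e2 : 2 * (s + 6) - 1 = 2*s+11 := by omega
  have e3 : 2 * (s + 6) - 2 = 2*s+10 := by omega
  have e4 : (s + 6) + 3 = s+9 := by omega
  have e5 : (s + 6) + 2 = s+8 := by omega
  have e6 : (s + 6) - 1 = s+5 := by omega
  have e7 : (s + 6) - 2 = s+4 := by omega
  unfold Qpoly QZ
  rw [e1, e2, e3, e4, e5, e6, e7]
  simp [Polynomial.map_add, Polynomial.map_sub, Polynomial.map_mul, Polynomial.map_pow,
    Polynomial.map_X, map_C, map_ofNat]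

lemma Rmap (s : ℕ) : Rpoly (s + 6) = (RZ s).map (Int.castRingHom ℚ) := by
  have e1 : 2 * (s + 6) + 1 = 2*s+13 := by omega
  have e2 : 2 * (s + 6) - 1 = 2*s+11 := by omega
  have e3 : 2 * (s + 6) - 2 = 2*s+10 := by omega
  have e4 : (s + 6) + 3 = s+9 := by omega
  have e5 : (s + 6) + 2 = s+8 := by omega
  have e6 : (s + 6) + 1 = s+7 := by omega
  have e6' : (s + 6) = s+6 := rfl
  have e7 : (s + 6) - 1 = s+5 := by omega
  have e8 : (s + 6) - 2 = s+4 := by omega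
  unfold Rpoly RZ
  rw [e1, e2, e3, e4, e5, e6, e7, e8]
  simp [Polynomial.map_add, Polynomial.map_sub, Polynomial.map_mul, Polynomial.map_pow,
    Polynomial.map_X, map_C, map_ofNat]

lemma Qmod (s : ℕ) :
    (QZ s).map (Int.castRingHom (ZMod 2)) = X^(s+4) * (X+1)^5 := by
  have key : QZ s = X^(s+4) * (X+1)^5
      + C 2 * (X^(2*s+13) - X^(2*s+11) + X^(2*s+10) - 3 * X^(s+8) - 5 * X^(s+7)
          - 5 * X^(s+6) - 2 * X^(s+5) - X^(s+4) - X^3 + X^2 - 1) := by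
    unfold QZ; simp only [map_ofNat]; ring
  rw [key]
  have h2 : ((Int.castRingHom (ZMod 2)) 2 : ZMod 2) = 0 := by decide
  simp only [Polynomial.map_add, Polynomial.map_mul, Polynomial.map_pow, Polynomial.map_X,
    Polynomial.map_one, map_C, h2, C_0, zero_mul, add_zero]

lemma Rmod (s : ℕ) :
    (RZ s).map (Int.castRingHom (ZMod 2)) = X^(s+4) * (X+1)^5 := by
  have key : RZ s = X^(s+4) * (X+1)^5
      + C 2 * (X^(2*s+13) - X^(2*s+11) + X^(2*s+10) - X^(s+9) - 2 * X^(s+8) - 7 * X^(s+7)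
          - 3 * X^(s+6) - 3 * X^(s+5) - X^3 + X^2 - 1) := by
    unfold RZ; simp only [map_ofNat]; ring
  rw [key]
  have h2 : ((Int.castRingHom (ZMod 2)) 2 : ZMod 2) = 0 := by decide
  simp only [Polynomial.map_add, Polynomial.map_mul, Polynomial.map_pow, Polynomial.map_X,
    Polynomial.map_one, map_C, h2, C_0, zero_mul, add_zero]

lemma not_dvd_aux {b : ℕ} (hb : 1 < b) (h1 : (cyclotomic b (ZMod 2)).eval 1 ≠ 0)
    {F : Polynomial ℤ} {m : ℕ}
    (hF : F.map (Int.castRingHom (ZMod 2)) = X^m * (X+1)^5) :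
    ¬ cyclotomic b ℚ ∣ F.map (Int.castRingHom ℚ) := by
  intro h
  have hZ : cyclotomic b ℤ ∣ F := by
    rw [← map_dvd_map (Int.castRingHom ℚ) Int.cast_injective
      (cyclotomic.monic b ℤ)]
    rwa [map_cyclotomic_int]
  have h2 : cyclotomic b (ZMod 2) ∣ (X^m * (X+1)^5 : Polynomial (ZMod 2)) := by
    rw [← hF, ← map_cyclotomic b (Int.castRingHom (ZMod 2))]
    exact Polynomial.map_dvd _ hZ
  have heq : (X + 1 : Polynomial (ZMod 2)) = X - C 1 := by
    have hn : (-1 : ZMod 2) = 1 := by decide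
    rw [sub_eq_add_neg, ← C_neg, hn, C_1]
  have hXdvd : ¬ (X : Polynomial (ZMod 2)) ∣ cyclotomic b (ZMod 2) := by
    rw [X_dvd_iff, cyclotomic_coeff_zero _ hb]
    exact one_ne_zero
  have hX1dvd : ¬ (X + 1 : Polynomial (ZMod 2)) ∣ cyclotomic b (ZMod 2) := by
    rw [heq, dvd_iff_isRoot]
    exact h1
  have hcop : IsCoprime (cyclotomic b (ZMod 2)) (X^m * (X+1)^5 : Polynomial (ZMod 2)) := by
    apply IsCoprime.mul_right
    · exact ((irreducible_X.coprime_iff_not_dvd.mpr hXdvd).symm).pow_right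
    · refine (((heq ▸ irreducible_X_sub_C (1 : ZMod 2)).coprime_iff_not_dvd.mpr
        hX1dvd).symm).pow_right
  have hu : IsUnit (cyclotomic b (ZMod 2)) := hcop.isUnit_of_dvd h2
  have hd := Polynomial.natDegree_eq_zero_of_isUnit hu
  rw [natDegree_cyclotomic] at hd
  have : 0 < b.totient := Nat.totient_pos.mpr (by omega)
  omega

lemma eval_one_ne_prime {p : ℕ} (hp : p.Prime) (hp11 : 3 ≤ p) :
    (cyclotomic p (ZMod 2)).eval 1 ≠ 0 := by
  have : Fact p.Prime := ⟨hp⟩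
  rw [eval_one_cyclotomic_prime]
  rw [Ne, ZMod.natCast_eq_zero_iff]
  intro h2
  have := (Nat.prime_dvd_prime_iff_eq Nat.prime_two hp).mp h2
  omega

lemma eval_one_ne_two_prime {p : ℕ} (hp : p.Prime) (hp11 : 3 ≤ p) :
    (cyclotomic (2 * p) (ZMod 2)).eval 1 ≠ 0 := by
  have h : ∀ {q : ℕ}, q.Prime → ∀ k : ℕ, q ^ k ≠ 2 * p := by
    intro q hq k hk
    have h2 : (2 : ℕ) ∣ q ^ k := hk ▸ ⟨p, rfl⟩
    have hq2 : q = 2 :=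
      ((Nat.prime_dvd_prime_iff_eq Nat.prime_two hq).mp
        (Nat.prime_two.dvd_of_dvd_pow h2)).symm
    have hpk : p ∣ q ^ k := hk ▸ ⟨2, by ring⟩
    have hpq : p ∣ q := hp.dvd_of_dvd_pow hpk
    rw [hq2] at hpq
    have := Nat.le_of_dvd (by norm_num) hpq
    omega
  rw [eval_one_cyclotomic_not_prime_pow h]
  exact one_ne_zero


/-- For even `t ≥ 6`: `Φ_p ∤ Q_t` and `Φ_{2p} ∤ Q_t` for all primes `p ≥ 11`, and
`Φ_p ∤ R_t` and `Φ_{2p} ∤ R_t` for all primes `p ≥ 13`. -/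
theorem cyclotomic_p_2p_not_dvd (t : ℕ) (ht : 6 ≤ t) (hte : Even t) :
    (∀ p : ℕ, p.Prime → 11 ≤ p →
      ¬ cyclotomic p ℚ ∣ Qpoly t ∧ ¬ cyclotomic (2 * p) ℚ ∣ Qpoly t) ∧
    (∀ p : ℕ, p.Prime → 13 ≤ p →
      ¬ cyclotomic p ℚ ∣ Rpoly t ∧ ¬ cyclotomic (2 * p) ℚ ∣ Rpoly t) := by
  obtain ⟨s, rfl⟩ : ∃ s, t = s + 6 := ⟨t - 6, by omega⟩
  constructor
  · intro p hp hp11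
    rw [Qmap]
    exact ⟨not_dvd_aux (by omega) (eval_one_ne_prime hp (by omega)) (Qmod s),
           not_dvd_aux (by omega) (eval_one_ne_two_prime hp (by omega)) (Qmod s)⟩
  · intro p hp hp13
    rw [Rmap]
    exact ⟨not_dvd_aux (by omega) (eval_one_ne_prime hp (by omega)) (Rmod s),
           not_dvd_aux (by omega) (eval_one_ne_two_prime hp (by omega)) (Rmod s)⟩
end

section
/- For each even integer t ≥ 6, the polynomial R_t(x) is not divisible by any cyclotomic polynomial Φ_b(x) with b ≥ 3; equivalently, no root of unity of order at least 3 is a root of R_t. -/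
open Polynomial
/-- Integer model of `Rpoly (2*n+6)` with subtraction-free exponents. -/
noncomputable def SZpoly (n : ℕ) : Polynomial ℤ :=
  C 2 * X ^ (4*n+13) - C 2 * X ^ (4*n+11) + C 2 * X ^ (4*n+10) - X ^ (2*n+9)
    + X ^ (2*n+8) - C 4 * X ^ (2*n+7) + C 4 * X ^ (2*n+6) - X ^ (2*n+5) + X ^ (2*n+4)
    - C 2 * X ^ 3 + C 2 * X ^ 2 - C 2

lemma Rpoly_eq_map (n : ℕ) :
    Rpoly (2*n+6) = (SZpoly n).map (Int.castRingHom ℚ) := by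
  have h1 : 2*(2*n+6)+1 = 4*n+13 := by omega
  have h2 : 2*(2*n+6)-1 = 4*n+11 := by omega
  have h3 : 2*(2*n+6)-2 = 4*n+10 := by omega
  have h4 : 2*n+6+3 = 2*n+9 := by omega
  have h5 : 2*n+6+2 = 2*n+8 := by omega
  have h6 : 2*n+6+1 = 2*n+7 := by omega
  have h7 : 2*n+6-1 = 2*n+5 := by omega
  have h8 : 2*n+6-2 = 2*n+4 := by omega
  simp only [Rpoly, SZpoly, h1, h2, h3, h4, h5, h6, h7, h8, Polynomial.map_sub,
    Polynomial.map_add, Polynomial.map_mul, Polynomial.map_pow, Polynomial.map_X,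
    Polynomial.map_C, map_ofNat, Polynomial.map_ofNat]

lemma two_eq_zero_poly : (2 : (ZMod 2)[X]) = 0 := CharTwo.two_eq_zero

lemma four_eq_zero_poly : (4 : (ZMod 2)[X]) = 0 := by
  rw [show (4 : (ZMod 2)[X]) = 2 * 2 by norm_num, two_eq_zero_poly, mul_zero]

lemma I_ne_one' : Complex.I ≠ 1 := by
  intro h
  have him := congrArg Complex.im h
  simp at him

lemma SZpoly_map_two (n : ℕ) :
    (SZpoly n).map (Int.castRingHom (ZMod 2)) = X ^ (2*n+4) * (X + 1)^5 := by
  have hX : ((X : (ZMod 2)[X]) + 1)^5 = X^5 + X^4 + X + 1 := by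
    have expand : ((X : (ZMod 2)[X]) + 1)^5
        = X^5 + 5*X^4 + 10*X^3 + 10*X^2 + 5*X + 1 := by ring
    rw [expand]
    linear_combination (2*(X:(ZMod 2)[X])^4 + 5*X^3 + 5*X^2 + 2*X) * two_eq_zero_poly
  simp only [SZpoly, Polynomial.map_sub, Polynomial.map_add, Polynomial.map_mul,
    Polynomial.map_pow, Polynomial.map_X, Polynomial.map_C, map_ofNat, Polynomial.map_ofNat]
  rw [hX]
  linear_combination ((X:(ZMod 2)[X])^(4*n+13) - X^(4*n+11) + X^(4*n+10) - X^(2*n+9)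
      - X^(2*n+5) - X^3 + X^2 - 1) * two_eq_zero_poly
    + ((X:(ZMod 2)[X])^(2*n+6) - X^(2*n+7)) * four_eq_zero_poly

lemma aeval_Rpoly (n : ℕ) (z : ℂ) :
    (aeval z) (Rpoly (2*n+6)) =
      2*z^(4*n+13) - 2*z^(4*n+11) + 2*z^(4*n+10) - z^(2*n+9) + z^(2*n+8)
        - 4*z^(2*n+7) + 4*z^(2*n+6) - z^(2*n+5) + z^(2*n+4) - 2*z^3 + 2*z^2 - 2 := by
  have h1 : 2*(2*n+6)+1 = 4*n+13 := by omega
  have h2 : 2*(2*n+6)-1 = 4*n+11 := by omega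
  have h3 : 2*(2*n+6)-2 = 4*n+10 := by omega
  have h4 : 2*n+6+3 = 2*n+9 := by omega
  have h5 : 2*n+6+2 = 2*n+8 := by omega
  have h6 : 2*n+6+1 = 2*n+7 := by omega
  have h7 : 2*n+6-1 = 2*n+5 := by omega
  have h8 : 2*n+6-2 = 2*n+4 := by omega
  simp only [Rpoly, h1, h2, h3, h4, h5, h6, h7, h8, map_sub, map_add, map_mul, map_pow,
    aeval_X, aeval_C, map_ofNat]

lemma aeval_eq_zero_of_dvd {b : ℕ} (hb : 0 < b) {p : ℚ[X]} (h : cyclotomic b ℚ ∣ p)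
    {z : ℂ} (hz : IsPrimitiveRoot z b) : (aeval z) p = 0 := by
  obtain ⟨g, rfl⟩ := h
  rw [map_mul]
  have hc : (aeval z) (cyclotomic b ℚ) = 0 := by
    rw [aeval_def, eval₂_eq_eval_map, map_cyclotomic]
    exact hz.isRoot_cyclotomic hb
  rw [hc, zero_mul]

lemma pow_red {ζ : ℂ} {p : ℕ} (hp : ζ^p = 1) (c r k : ℕ) (h : c = p*k + r) :
    ζ^c = ζ^r := by
  subst h; rw [pow_add, pow_mul, hp, one_pow, one_mul]

lemma not_dvd_four (n : ℕ) : ¬ cyclotomic 4 ℚ ∣ Rpoly (2*n+6) := by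
  intro h
  have hprim : IsPrimitiveRoot Complex.I 4 := by
    have h4 := Complex.isPrimitiveRoot_exp 4 (by norm_num)
    rw [Nat.cast_ofNat] at h4
    have he : Complex.exp (2*↑Real.pi*Complex.I/4) = Complex.I := by
      have harg : (2*(Real.pi:ℂ)*Complex.I/4) = (↑(Real.pi/2))*Complex.I := by
        push_cast; ring
      rw [harg, Complex.exp_mul_I, ← Complex.ofReal_cos, ← Complex.ofReal_sin,
        Real.cos_pi_div_two, Real.sin_pi_div_two]
      simp
    rwa [he] at h4
  have hE := aeval_eq_zero_of_dvd (by norm_num) h hprim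
  rw [aeval_Rpoly] at hE
  have hI4 : Complex.I ^ 4 = 1 := Complex.I_pow_four
  have hI2 : Complex.I ^ 2 = -1 := Complex.I_sq
  have hI3 : Complex.I ^ 3 = -Complex.I := by
    rw [pow_succ, hI2]; ring
  rcases Nat.even_or_odd n with ⟨m, rfl⟩ | ⟨m, rfl⟩
  · rw [pow_red hI4 (4*(m+m)+13) 1 (2*m+3) (by ring),
      pow_red hI4 (4*(m+m)+11) 3 (2*m+2) (by ring),
      pow_red hI4 (4*(m+m)+10) 2 (2*m+2) (by ring),
      pow_red hI4 (2*(m+m)+9) 1 (m+2) (by ring),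
      pow_red hI4 (2*(m+m)+8) 0 (m+2) (by ring),
      pow_red hI4 (2*(m+m)+7) 3 (m+1) (by ring),
      pow_red hI4 (2*(m+m)+6) 2 (m+1) (by ring),
      pow_red hI4 (2*(m+m)+5) 1 (m+1) (by ring),
      pow_red hI4 (2*(m+m)+4) 0 (m+1) (by ring),
      hI3, hI2, pow_one, pow_zero] at hE
    -- hE : 8I - 8 = 0
    have : Complex.I = 1 := by linear_combination hE/8
    exact I_ne_one' this
  · rw [pow_red hI4 (4*(2*m+1)+13) 1 (2*m+4) (by ring),
      pow_red hI4 (4*(2*m+1)+11) 3 (2*m+3) (by ring),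
      pow_red hI4 (4*(2*m+1)+10) 2 (2*m+3) (by ring),
      pow_red hI4 (2*(2*m+1)+9) 3 (m+2) (by ring),
      pow_red hI4 (2*(2*m+1)+8) 2 (m+2) (by ring),
      pow_red hI4 (2*(2*m+1)+7) 1 (m+2) (by ring),
      pow_red hI4 (2*(2*m+1)+6) 0 (m+2) (by ring),
      pow_red hI4 (2*(2*m+1)+5) 3 (m+1) (by ring),
      pow_red hI4 (2*(2*m+1)+4) 2 (m+1) (by ring),
      hI3, hI2, pow_one, pow_zero] at hE
    -- hE : 4I - 4 = 0
    have : Complex.I = 1 := by linear_combination hE/4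
    exact I_ne_one' this

lemma not_dvd_eight (n : ℕ) : ¬ cyclotomic 8 ℚ ∣ Rpoly (2*n+6) := by
  intro h
  have hprim : IsPrimitiveRoot (Complex.exp (2*↑Real.pi*Complex.I/8)) 8 := by
    have h8 := Complex.isPrimitiveRoot_exp 8 (by norm_num)
    rwa [Nat.cast_ofNat] at h8
  set ζ : ℂ := Complex.exp (2*↑Real.pi*Complex.I/8) with hζdef
  have hz8 : ζ^8 = 1 := hprim.pow_eq_one
  have hz2 : ζ^2 = Complex.I := by
    rw [hζdef, ← Complex.exp_nat_mul]
    have harg : ((2:ℕ):ℂ) * (2*↑Real.pi*Complex.I/8) = (↑(Real.pi/2))*Complex.I := by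
      push_cast; ring
    rw [harg, Complex.exp_mul_I, ← Complex.ofReal_cos, ← Complex.ofReal_sin,
      Real.cos_pi_div_two, Real.sin_pi_div_two]
    simp
  have hz3 : ζ^3 = Complex.I * ζ := by
    have e : ζ^3 = ζ^2 * ζ := by ring
    rw [e, hz2]
  have hz4 : ζ^4 = -1 := by
    have e : ζ^4 = (ζ^2)^2 := by ring
    rw [e, hz2, Complex.I_sq]
  have hz5 : ζ^5 = -ζ := by
    have e : ζ^5 = ζ^4 * ζ := by ring
    rw [e, hz4]; ring
  have hz6 : ζ^6 = -Complex.I := by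
    have e : ζ^6 = ζ^4 * ζ^2 := by ring
    rw [e, hz4, hz2]; ring
  have hz7 : ζ^7 = -(Complex.I * ζ) := by
    have e : ζ^7 = ζ^4 * ζ^3 := by ring
    rw [e, hz4, hz3]; ring
  have hE := aeval_eq_zero_of_dvd (by norm_num) h hprim
  rw [aeval_Rpoly] at hE
  obtain ⟨q, r, hr, rfl⟩ : ∃ q r, r < 4 ∧ n = 4*q + r :=
    ⟨n / 4, n % 4, Nat.mod_lt _ (by norm_num), by omega⟩
  interval_cases r
  · rw [pow_red hz8 (4*(4*q+0)+13) 5 (2*q+1) (by ring),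
      pow_red hz8 (4*(4*q+0)+11) 3 (2*q+1) (by ring),
      pow_red hz8 (4*(4*q+0)+10) 2 (2*q+1) (by ring),
      pow_red hz8 (2*(4*q+0)+9) 1 (q+1) (by ring),
      pow_red hz8 (2*(4*q+0)+8) 0 (q+1) (by ring),
      pow_red hz8 (2*(4*q+0)+7) 7 q (by ring),
      pow_red hz8 (2*(4*q+0)+6) 6 q (by ring),
      pow_red hz8 (2*(4*q+0)+5) 5 q (by ring),
      pow_red hz8 (2*(4*q+0)+4) 4 q (by ring),
      hz7, hz6, hz5, hz4, hz3, hz2, pow_one, pow_zero] at hE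
    -- hE : -2ζ - 2 = 0
    have hζ1 : ζ = -1 := by linear_combination (-1/2 : ℂ) * hE
    have : (1:ℂ) = Complex.I := by rw [← hz2, hζ1]; norm_num
    exact I_ne_one' this.symm
  · rw [pow_red hz8 (4*(4*q+1)+13) 1 (2*q+2) (by ring),
      pow_red hz8 (4*(4*q+1)+11) 7 (2*q+1) (by ring),
      pow_red hz8 (4*(4*q+1)+10) 6 (2*q+1) (by ring),
      pow_red hz8 (2*(4*q+1)+9) 3 (q+1) (by ring),
      pow_red hz8 (2*(4*q+1)+8) 2 (q+1) (by ring),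
      pow_red hz8 (2*(4*q+1)+7) 1 (q+1) (by ring),
      pow_red hz8 (2*(4*q+1)+6) 0 (q+1) (by ring),
      pow_red hz8 (2*(4*q+1)+5) 7 q (by ring),
      pow_red hz8 (2*(4*q+1)+4) 6 q (by ring),
      hz7, hz6, hz3, hz2, pow_one, pow_zero] at hE
    -- hE : -2ζ + 2 = 0
    have hζ1 : ζ = 1 := by linear_combination (-1/2 : ℂ) * hE
    have : (1:ℂ) = Complex.I := by rw [← hz2, hζ1]; norm_num
    exact I_ne_one' this.symm
  · rw [pow_red hz8 (4*(4*q+2)+13) 5 (2*q+2) (by ring),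
      pow_red hz8 (4*(4*q+2)+11) 3 (2*q+2) (by ring),
      pow_red hz8 (4*(4*q+2)+10) 2 (2*q+2) (by ring),
      pow_red hz8 (2*(4*q+2)+9) 5 (q+1) (by ring),
      pow_red hz8 (2*(4*q+2)+8) 4 (q+1) (by ring),
      pow_red hz8 (2*(4*q+2)+7) 3 (q+1) (by ring),
      pow_red hz8 (2*(4*q+2)+6) 2 (q+1) (by ring),
      pow_red hz8 (2*(4*q+2)+5) 1 (q+1) (by ring),
      pow_red hz8 (2*(4*q+2)+4) 0 (q+1) (by ring),
      hz5, hz4, hz3, hz2, pow_one, pow_zero] at hE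
    -- hE : (-2-8I)ζ + 8I - 2 = 0
    have hlin : (1 + 4*Complex.I) * ζ = 4*Complex.I - 1 := by
      linear_combination (-1/2 : ℂ) * hE
    have hsq : ((1 + 4*Complex.I) * ζ)^2 = (4*Complex.I - 1)^2 := by rw [hlin]
    rw [mul_pow, hz2] at hsq
    have h7 : (7:ℂ) - 7*Complex.I = 0 := by
      linear_combination hsq + (8 - 16*Complex.I) * Complex.I_sq
    have : Complex.I = 1 := by linear_combination (-1/7 : ℂ) * h7
    exact I_ne_one' this
  · rw [pow_red hz8 (4*(4*q+3)+13) 1 (2*q+3) (by ring),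
      pow_red hz8 (4*(4*q+3)+11) 7 (2*q+2) (by ring),
      pow_red hz8 (4*(4*q+3)+10) 6 (2*q+2) (by ring),
      pow_red hz8 (2*(4*q+3)+9) 7 (q+1) (by ring),
      pow_red hz8 (2*(4*q+3)+8) 6 (q+1) (by ring),
      pow_red hz8 (2*(4*q+3)+7) 5 (q+1) (by ring),
      pow_red hz8 (2*(4*q+3)+6) 4 (q+1) (by ring),
      pow_red hz8 (2*(4*q+3)+5) 3 (q+1) (by ring),
      pow_red hz8 (2*(4*q+3)+4) 2 (q+1) (by ring),
      hz7, hz6, hz5, hz4, hz3, hz2, pow_one] at hE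
    -- hE : 6ζ - 6 = 0
    have hζ1 : ζ = 1 := by linear_combination (1/6 : ℂ) * hE
    have : (1:ℂ) = Complex.I := by rw [← hz2, hζ1]; norm_num
    exact I_ne_one' this.symm

/-- For even `t ≥ 6`, `R_t` is not divisible by any cyclotomic polynomial `Φ_b` with `b ≥ 3`. -/
theorem Rpoly_no_cyclotomic_dvd (t : ℕ) (ht : 6 ≤ t) (hte : Even t) :
    ∀ b : ℕ, 3 ≤ b → ¬ cyclotomic b ℚ ∣ Rpoly t := by
  obtain ⟨m, hm⟩ := hte
  obtain ⟨n, rfl⟩ : ∃ n, t = 2*n+6 := ⟨m - 3, by omega⟩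
  intro b hb hdvd
  -- descend to ℤ
  have hZ : cyclotomic b ℤ ∣ SZpoly n := by
    have h := hdvd
    rw [Rpoly_eq_map, ← map_cyclotomic b (Int.castRingHom ℚ)] at h
    exact (map_dvd_map _ Int.cast_injective (cyclotomic.monic b ℤ)).mp h
  -- reduce mod 2
  have h2dvd : cyclotomic b (ZMod 2) ∣ X ^ (2*n+4) * ((X:(ZMod 2)[X]) + 1)^5 := by
    have h := Polynomial.map_dvd (Int.castRingHom (ZMod 2)) hZ
    rwa [map_cyclotomic, SZpoly_map_two] at h
  -- the cyclotomic polynomial is coprime to X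
  have hcoX : IsCoprime (cyclotomic b (ZMod 2)) ((X:(ZMod 2)[X]) ^ (2*n+4)) := by
    apply IsCoprime.pow_right
    apply IsCoprime.symm
    refine ⟨-(cyclotomic b (ZMod 2)).divX, 1, ?_⟩
    have h0 : (cyclotomic b (ZMod 2)).coeff 0 = 1 :=
      cyclotomic_coeff_zero (ZMod 2) (by omega)
    have hx := X_mul_divX_add (cyclotomic b (ZMod 2))
    rw [h0, Polynomial.C_1] at hx
    linear_combination -hx
  have hdvd5 : cyclotomic b (ZMod 2) ∣ ((X:(ZMod 2)[X]) + 1)^5 :=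
    hcoX.dvd_of_dvd_mul_left h2dvd
  -- degree bound : totient b ≤ 5
  have hXne : ((X:(ZMod 2)[X]) + 1) ≠ 0 := fun hcon => by
    simpa using congrArg (eval 0) hcon
  have hdeg : Nat.totient b ≤ 5 := by
    have h := Polynomial.natDegree_le_of_dvd hdvd5 (pow_ne_zero _ hXne)
    have h1deg : ((X:(ZMod 2)[X]) + 1).natDegree = 1 := by
      rw [show ((X:(ZMod 2)[X]) + 1) = X + C 1 by rw [Polynomial.C_1]]
      exact natDegree_X_add_C _
    rwa [natDegree_cyclotomic, natDegree_pow, h1deg, mul_one] at h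
  -- `X + 1` divides the cyclotomic polynomial mod 2, hence it vanishes at 1
  have hXdvd : ((X:(ZMod 2)[X]) + 1) ∣ cyclotomic b (ZMod 2) := by
    have hprime : Prime ((X:(ZMod 2)[X]) + 1) := by
      have hp := Polynomial.prime_X_sub_C (1 : ZMod 2)
      have he : (X - C (1:ZMod 2)) = X + 1 := by
        rw [Polynomial.C_1]
        linear_combination -(two_eq_zero_poly)
      rwa [he] at hp
    obtain ⟨i, hi, hass⟩ := (dvd_prime_pow hprime 5).mp hdvd5
    rcases Nat.eq_zero_or_pos i with rfl | hipos
    · exfalso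
      have hunit : IsUnit (cyclotomic b (ZMod 2)) := by
        rw [pow_zero] at hass
        exact associated_one_iff_isUnit.mp hass
      have hdeg0 : (cyclotomic b (ZMod 2)).natDegree = 0 :=
        Polynomial.natDegree_eq_zero_of_isUnit hunit
      rw [natDegree_cyclotomic] at hdeg0
      have : 0 < Nat.totient b := Nat.totient_pos.mpr (by omega)
      omega
    · exact (dvd_pow_self _ hipos.ne').trans hass.symm.dvd
  have heval : Polynomial.eval (1 : ZMod 2) (cyclotomic b (ZMod 2)) = 0 := by
    obtain ⟨c, hc⟩ := hXdvd
    rw [hc, eval_mul, eval_add, eval_X, eval_one,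
      show (1 + 1 : ZMod 2) = 0 from rfl, zero_mul]
  -- prime power analysis
  by_cases hpp : IsPrimePow b
  · obtain ⟨p, k, hp, hk, rfl⟩ := hpp
    haveI : Fact p.Prime := ⟨Nat.prime_iff.mpr hp⟩
    obtain ⟨j, rfl⟩ : ∃ j, k = j + 1 := ⟨k - 1, by omega⟩
    have hev := Polynomial.eval_one_cyclotomic_prime_pow (R := ZMod 2) (p := p) j
    have hp0 : ((p:ℕ) : ZMod 2) = 0 := by rw [← hev]; exact heval
    have hdvd2 : (2:ℕ) ∣ p := (ZMod.natCast_eq_zero_iff p 2).mp hp0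
    have hp2 : p = 2 :=
      ((Nat.prime_dvd_prime_iff_eq Nat.prime_two (Nat.prime_iff.mpr hp)).mp hdvd2).symm
    subst hp2
    have ht2 : Nat.totient (2^(j+1)) = 2^j := by
      rw [Nat.totient_prime_pow Nat.prime_two (Nat.succ_pos j)]
      simp
    have hj : 2^j ≤ 5 := by rw [← ht2]; exact hdeg
    have hj3 : j < 3 := by
      by_contra hcon
      push_neg at hcon
      have : 2^3 ≤ 2^j := Nat.pow_le_pow_right (by norm_num) hcon
      omega
    interval_cases j
    · norm_num at hb
    · exact not_dvd_four n (by norm_num at hdvd ⊢; exact hdvd)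
    · exact not_dvd_eight n (by norm_num at hdvd ⊢; exact hdvd)
  · have hev := Polynomial.eval_one_cyclotomic_not_prime_pow (R := ZMod 2) (n := b)
      (by
        intro p hp k hpk
        apply hpp
        refine ⟨p, k, hp.prime, ?_, hpk⟩
        rcases Nat.eq_zero_or_pos k with rfl | hkpos
        · exfalso; rw [pow_zero] at hpk; omega
        · exact hkpos)
    rw [heval] at hev
    exact one_ne_zero hev.symm
end

section
/- For any even integer t ≥ 4 and any integer β ≥ 6, neither U_t(x) nor W_t(x) is divisible in ℚ[x] by any polynomial V(x) ∈ ℚ[x] that has at least two nonzero terms and such that every exponent occurring with nonzero coefficient in V is divisible by β. -/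
/-!
If every exponent of `V` is divisible by `β`, multiplying by `V` preserves exponents modulo `β`,
so `V` divides the part of any multiple of `V` made of the exponents in a fixed residue class.
All exponents of `U_t` and `W_t` lie in `{0} ∪ [t - 4, t + 3] ∪ {2t - 1}`, and since `β ≥ 6` one
of `e = t - 2`, `e = t - 1` is alone in its residue class among them. The corresponding part of
`U_t` (or `W_t`) is then a nonzero monomial `c xᵉ`, so `V` divides `xᵉ` and is itself a monomial,
contradicting its two nonzero terms.
-/

open Polynomial

/-- `U_t(x) = 2x^{2t−1} + x^{t+3} − x^{t+2} + x^{t+1} − 3x^t + 3x^{t−1} − x^{t−2} + x^{t−3}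
− x^{t−4} − 2`. -/
noncomputable def Upoly (t : ℕ) : Polynomial ℚ :=
  C 2 * X ^ (2 * t - 1) + X ^ (t + 3) - X ^ (t + 2) + X ^ (t + 1) - C 3 * X ^ t
    + C 3 * X ^ (t - 1) - X ^ (t - 2) + X ^ (t - 3) - X ^ (t - 4) - C 2

/-- `W_t(x) = 2x^{2t−1} − x^{t+3} + x^{t+2} − x^{t+1} − x^t + x^{t−1} + x^{t−2} − x^{t−3}
+ x^{t−4} − 2`. -/
noncomputable def Wpoly (t : ℕ) : Polynomial ℚ :=
  C 2 * X ^ (2 * t - 1) - X ^ (t + 3) + X ^ (t + 2) - X ^ (t + 1) - X ^ t + X ^ (t - 1)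
    + X ^ (t - 2) - X ^ (t - 3) + X ^ (t - 4) - C 2

open Finset

theorem Nat.ModEq.eq_of_lt_add_of_lt_add {n a b : ℕ} (h : a ≡ b [MOD n]) (hab : a < b + n)
    (hba : b < a + n) : a = b :=
  le_antisymm (h.le_of_lt_add hab) (h.symm.le_of_lt_add hba)

theorem Nat.add_le_of_dvd_of_dvd_of_lt {n a b : ℕ} (ha : n ∣ a) (hb : n ∣ b) (hab : a < b) :
    a + n ≤ b :=
  ((Nat.modEq_zero_iff_dvd.2 ha).trans (Nat.modEq_zero_iff_dvd.2 hb).symm).add_le_of_lt hab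

namespace Polynomial

section Semiring

variable {R : Type*} [Semiring R]

noncomputable def modSection (β r : ℕ) (P : R[X]) : R[X] :=
  ∑ n ∈ P.support with n % β = r, monomial n (P.coeff n)

theorem coeff_modSection (β r : ℕ) (P : R[X]) (n : ℕ) :
    (modSection β r P).coeff n = if n % β = r then P.coeff n else 0 := by
  simp only [modSection, finsetSum_coeff, coeff_monomial, sum_ite_eq', mem_filter, mem_support_iff]
  split_ifs <;> simp_all

theorem modSection_mul {β : ℕ} {V : R[X]} (hV : ∀ k ∈ V.support, β ∣ k) (r : ℕ) (Q : R[X]) :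
    modSection β r (V * Q) = V * modSection β r Q := by
  ext m
  rw [coeff_modSection, coeff_mul, coeff_mul, ite_sum_zero]
  refine sum_congr rfl fun x hx => ?_
  rw [HasAntidiagonal.mem_antidiagonal] at hx
  rw [coeff_modSection, mul_ite, mul_zero]
  by_cases hi : V.coeff x.1 = 0
  · simp [hi]
  · obtain ⟨k, hk⟩ := hV _ (mem_support_iff.2 hi)
    rw [← hx, hk, Nat.mul_add_mod]

theorem dvd_modSection {β : ℕ} {V P : R[X]} (hV : ∀ k ∈ V.support, β ∣ k) (hVP : V ∣ P)
    (r : ℕ) : V ∣ modSection β r P := by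
  obtain ⟨Q, rfl⟩ := hVP
  exact ⟨modSection β r Q, modSection_mul hV r Q⟩

end Semiring

theorem card_support_le_one_of_dvd_X_pow {R : Type*} [CommRing R] [IsDomain R] {V : R[X]}
    {e : ℕ} (h : V ∣ X ^ e) : #V.support ≤ 1 := by
  obtain ⟨i, -, hVX⟩ := (dvd_prime_pow prime_X e).mp h
  obtain ⟨u, hu⟩ := hVX.symm
  obtain ⟨a, -, hCa⟩ := isUnit_iff.mp u.isUnit
  refine card_support_le_one_iff_monomial.2 ⟨i, a, ?_⟩
  rw [← hu, ← hCa, mul_comm, C_mul_X_pow_eq_monomial]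

theorem not_dvd_of_isolated_coeff {K : Type*} [Field K] {V P : K[X]} {β e : ℕ}
    (hV : 2 ≤ #V.support) (hexp : ∀ k ∈ V.support, β ∣ k) (he : P.coeff e ≠ 0)
    (hiso : ∀ m, m ≡ e [MOD β] → P.coeff m ≠ 0 → m = e) : ¬ V ∣ P := by
  intro hVP
  have hsec : modSection β (e % β) P = C (P.coeff e) * X ^ e := by
    ext m
    rw [coeff_modSection, coeff_C_mul_X_pow]
    by_cases hme : m = e
    · simp [hme]
    · simp only [hme, if_false, ite_eq_right_iff]
      exact fun hm => not_not.1 fun hPm => hme (hiso m hm hPm)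
  have hVX : V ∣ X ^ e := by
    rw [← (isUnit_C.2 he.isUnit).dvd_mul_left, ← hsec]
    exact dvd_modSection hexp hVP _
  have := card_support_le_one_of_dvd_X_pow hVX
  omega

end Polynomial

open Polynomial

def uwExponents (t : ℕ) : Finset ℕ :=
  {0, 2 * t - 1} ∪ Icc (t - 4) (t + 3)

theorem support_Upoly_subset (t : ℕ) : (Upoly t).support ⊆ uwExponents t := by
  intro n hn
  contrapose! hn
  simp only [uwExponents, mem_union, mem_insert, mem_singleton, mem_Icc, not_or, not_and_or,
    not_le] at hn
  simp (disch := omega) only [Upoly, mem_support_iff, coeff_add, coeff_sub, coeff_C_mul,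
    coeff_X_pow, coeff_C, if_neg]
  norm_num

theorem support_Wpoly_subset (t : ℕ) : (Wpoly t).support ⊆ uwExponents t := by
  intro n hn
  contrapose! hn
  simp only [uwExponents, mem_union, mem_insert, mem_singleton, mem_Icc, not_or, not_and_or,
    not_le] at hn
  simp (disch := omega) only [Wpoly, mem_support_iff, coeff_add, coeff_sub, coeff_C_mul,
    coeff_X_pow, coeff_C, if_neg]
  norm_num

theorem Upoly_coeff_sub_two {t : ℕ} (ht : 4 ≤ t) : (Upoly t).coeff (t - 2) = -1 := by
  simp (disch := omega) only [Upoly, coeff_add, coeff_sub, coeff_C_mul, coeff_X_pow, coeff_C,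
    if_neg]
  norm_num

theorem Upoly_coeff_sub_one {t : ℕ} (ht : 4 ≤ t) : (Upoly t).coeff (t - 1) = 3 := by
  simp (disch := omega) only [Upoly, coeff_add, coeff_sub, coeff_C_mul, coeff_X_pow, coeff_C,
    if_neg]
  norm_num

theorem Wpoly_coeff_sub_two {t : ℕ} (ht : 4 ≤ t) : (Wpoly t).coeff (t - 2) = 1 := by
  simp (disch := omega) only [Wpoly, coeff_add, coeff_sub, coeff_C_mul, coeff_X_pow, coeff_C,
    if_neg]
  norm_num

theorem Wpoly_coeff_sub_one {t : ℕ} (ht : 4 ≤ t) : (Wpoly t).coeff (t - 1) = 1 := by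
  simp (disch := omega) only [Wpoly, coeff_add, coeff_sub, coeff_C_mul, coeff_X_pow, coeff_C,
    if_neg]
  norm_num

/-- For `e = t - 2, t - 1`, the numbers `e` and `2t - 1 - e` run over `t - 2, …, t + 1`, at most
one of which is a multiple of `β`. -/
theorem exists_exponent_not_modEq_extremes {t β : ℕ} (ht : 4 ≤ t) (hβ : 6 ≤ β) :
    ∃ e, (e = t - 2 ∨ e = t - 1) ∧ ¬ e ≡ 0 [MOD β] ∧ ¬ e ≡ 2 * t - 1 [MOD β] := by
  have sep {a b : ℕ} (ha : β ∣ a) (hb : β ∣ b) (hab : a < b) : a + 6 ≤ b :=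
    (Nat.add_le_add_left hβ a).trans (Nat.add_le_of_dvd_of_dvd_of_lt ha hb hab)
  by_cases hbad : β ∣ t - 2 ∨ β ∣ t + 1
  · refine ⟨t - 1, Or.inr rfl, ?_, ?_⟩
    · rw [Nat.modEq_zero_iff_dvd]
      intro h
      rcases hbad with hbad | hbad
      · have := sep hbad h (by omega); omega
      · have := sep h hbad (by omega); omega
    · rw [Nat.modEq_iff_dvd' (by omega), show 2 * t - 1 - (t - 1) = t by omega]
      intro h
      rcases hbad with hbad | hbad
      · have := sep hbad h (by omega); omega
      · have := sep h hbad (by omega); omega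
  · refine ⟨t - 2, Or.inl rfl, ?_, ?_⟩
    · rw [Nat.modEq_zero_iff_dvd]
      exact fun h => hbad (Or.inl h)
    · rw [Nat.modEq_iff_dvd' (by omega), show 2 * t - 1 - (t - 2) = t + 1 by omega]
      exact fun h => hbad (Or.inr h)

theorem eq_of_mem_uwExponents_of_modEq {t β e m : ℕ} (hβ : 6 ≤ β) (hlo : t - 2 ≤ e)
    (hhi : e ≤ t - 1) (h0 : ¬ e ≡ 0 [MOD β]) (htop : ¬ e ≡ 2 * t - 1 [MOD β])
    (hm : m ∈ uwExponents t) (hme : m ≡ e [MOD β]) : m = e := by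
  simp only [uwExponents, mem_union, mem_insert, mem_singleton, mem_Icc] at hm
  rcases hm with (rfl | rfl) | ⟨hmlo, hmhi⟩
  · exact absurd hme.symm h0
  · exact absurd hme.symm htop
  · exact hme.eq_of_lt_add_of_lt_add (by omega) (by omega)

theorem UWpoly_not_dvd_by_beta_lacunary_general (t : ℕ) (ht : 4 ≤ t) (β : ℕ)
    (hβ : 6 ≤ β) (V : Polynomial ℚ) (hV : 2 ≤ V.support.card)
    (hexp : ∀ k ∈ V.support, β ∣ k) :
    ¬ V ∣ Upoly t ∧ ¬ V ∣ Wpoly t := by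
  obtain ⟨e, he, h0, htop⟩ := exists_exponent_not_modEq_extremes ht hβ
  have key (P : ℚ[X]) (hP : P.support ⊆ uwExponents t) (hPe : P.coeff e ≠ 0) : ¬ V ∣ P :=
    not_dvd_of_isolated_coeff hV hexp hPe fun m hm hPm =>
      eq_of_mem_uwExponents_of_modEq hβ (by omega) (by omega) h0 htop
        (hP (mem_support_iff.2 hPm)) hm
  rcases he with rfl | rfl
  · exact ⟨key _ (support_Upoly_subset t) (by norm_num [Upoly_coeff_sub_two ht]),
      key _ (support_Wpoly_subset t) (by norm_num [Wpoly_coeff_sub_two ht])⟩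
  · exact ⟨key _ (support_Upoly_subset t) (by norm_num [Upoly_coeff_sub_one ht]),
      key _ (support_Wpoly_subset t) (by norm_num [Wpoly_coeff_sub_one ht])⟩

/-- For even `t ≥ 4` and `β ≥ 6`, neither `U_t` nor `W_t` is divisible by any rational
polynomial with at least two nonzero terms all of whose exponents are divisible by `β`. -/
theorem UWpoly_not_dvd_by_beta_lacunary (t : ℕ) (ht : 4 ≤ t) (hte : Even t) (β : ℕ)
    (hβ : 6 ≤ β) (V : Polynomial ℚ) (hV : 2 ≤ V.support.card)
    (hexp : ∀ k ∈ V.support, β ∣ k) :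
    ¬ V ∣ Upoly t ∧ ¬ V ∣ Wpoly t :=
  UWpoly_not_dvd_by_beta_lacunary_general t ht β hβ V hV hexp
end

section
/- For each even integer t ≥ 4 and each integer b ≥ 3, if the cyclotomic polynomial Φ_b(x) divides U_t(x) or divides W_t(x), then: p² does not divide b for any prime p ≥ 7; 5³ ∤ b and 3³ ∤ b; and if 2² ∣ b then b ∈ {4, 8}. -/
open Polynomial

lemma geom_aux {q : ℕ} {μ : ℂ} (hμ : IsPrimitiveRoot μ q) (e : ℕ) :
    ∑ k ∈ Finset.range q, (μ ^ e) ^ k = if q ∣ e then (q : ℂ) else 0 := by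
  by_cases h : q ∣ e
  · rw [if_pos h, (hμ.pow_eq_one_iff_dvd e).mpr h]
    simp
  · rw [if_neg h]
    have h1 : μ ^ e ≠ 1 := fun hh => h ((hμ.pow_eq_one_iff_dvd e).mp hh)
    have h2 : (μ ^ e) ^ q = 1 := by
      rw [← pow_mul, mul_comm, pow_mul, hμ.pow_eq_one, one_pow]
    rw [geom_sum_eq h1, h2, sub_self, zero_div]

lemma hstep (μ ζ : ℂ) (r e k : ℕ) (c : ℂ) :
    (μ^r)^k * (c * (ζ*μ^k)^e) = c * ζ^e * (μ^(e+r))^k := by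
  rw [mul_pow, ← pow_mul, ← pow_mul, ← pow_mul, add_mul, pow_add, mul_comm k e]
  ring

lemma fourierAux (q s r : ℕ) (μ ζ : ℂ) (hμ : IsPrimitiveRoot μ q)
    (a c7 c6 c5 c4 c3 c2 c1 c0 d : ℂ)
    (h : ∀ k : ℕ, a*(ζ*μ^k)^(2*s+7) + c7*(ζ*μ^k)^(s+7) + c6*(ζ*μ^k)^(s+6) + c5*(ζ*μ^k)^(s+5)
      + c4*(ζ*μ^k)^(s+4) + c3*(ζ*μ^k)^(s+3) + c2*(ζ*μ^k)^(s+2) + c1*(ζ*μ^k)^(s+1)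
      + c0*(ζ*μ^k)^s + d = 0) :
    a*ζ^(2*s+7)*(if q ∣ 2*s+7+r then (q:ℂ) else 0)
      + c7*ζ^(s+7)*(if q ∣ s+7+r then (q:ℂ) else 0)
      + c6*ζ^(s+6)*(if q ∣ s+6+r then (q:ℂ) else 0)
      + c5*ζ^(s+5)*(if q ∣ s+5+r then (q:ℂ) else 0)
      + c4*ζ^(s+4)*(if q ∣ s+4+r then (q:ℂ) else 0)
      + c3*ζ^(s+3)*(if q ∣ s+3+r then (q:ℂ) else 0)
      + c2*ζ^(s+2)*(if q ∣ s+2+r then (q:ℂ) else 0)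
      + c1*ζ^(s+1)*(if q ∣ s+1+r then (q:ℂ) else 0)
      + c0*ζ^s*(if q ∣ s+r then (q:ℂ) else 0)
      + d*(if q ∣ r then (q:ℂ) else 0) = 0 := by
  rw [← geom_aux hμ (2*s+7+r), ← geom_aux hμ (s+7+r), ← geom_aux hμ (s+6+r),
    ← geom_aux hμ (s+5+r), ← geom_aux hμ (s+4+r), ← geom_aux hμ (s+3+r),
    ← geom_aux hμ (s+2+r), ← geom_aux hμ (s+1+r), ← geom_aux hμ (s+r), ← geom_aux hμ r]
  simp only [Finset.mul_sum]
  rw [← Finset.sum_add_distrib, ← Finset.sum_add_distrib, ← Finset.sum_add_distrib,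
    ← Finset.sum_add_distrib, ← Finset.sum_add_distrib, ← Finset.sum_add_distrib,
    ← Finset.sum_add_distrib, ← Finset.sum_add_distrib, ← Finset.sum_add_distrib]
  apply Finset.sum_eq_zero
  intro k _
  have h2 : (μ^r)^k * (a*(ζ*μ^k)^(2*s+7) + c7*(ζ*μ^k)^(s+7) + c6*(ζ*μ^k)^(s+6)
      + c5*(ζ*μ^k)^(s+5) + c4*(ζ*μ^k)^(s+4) + c3*(ζ*μ^k)^(s+3) + c2*(ζ*μ^k)^(s+2)
      + c1*(ζ*μ^k)^(s+1) + c0*(ζ*μ^k)^s + d) = 0 := by rw [h k, mul_zero]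
  simp only [mul_add, hstep] at h2
  have h3 : (μ^r)^k * (c0*(ζ*μ^k)^s) = c0 * ζ^s * (μ^(s+r))^k := hstep μ ζ r s k c0
  linear_combination h2

lemma not_dvd_shift {q e e0 r : ℕ} (hr : (r : ℤ) = e0 * q - e0)
    (h : ¬ ((q : ℤ) ∣ (e : ℤ) - (e0 : ℤ))) : ¬ q ∣ (e + r) := by
  intro hd
  apply h
  have h1 : (q : ℤ) ∣ ((e : ℤ) + (r : ℤ)) := by exact_mod_cast hd
  have h2 : ((e : ℤ) - e0) = ((e : ℤ) + r) - e0 * q := by rw [hr]; ring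
  rw [h2]
  exact dvd_sub h1 ⟨(e0 : ℤ), by ring⟩

lemma nat_mul_sub_one (a q : ℕ) (hq : 1 ≤ q) : a * (q-1) = a*q - a := by
  cases q with
  | zero => omega
  | succ n => simp [Nat.mul_succ, Nat.succ_sub_one]

lemma cast_mul_sub_one (a q : ℕ) (hq : 1 ≤ q) : ((a * (q-1) : ℕ) : ℤ) = a * q - a := by
  rw [nat_mul_sub_one a q hq, Int.natCast_sub (Nat.le_mul_of_pos_right a (by omega : 0 < q))]
  push_cast
  ring

lemma not_dvd_shift0 {q e0 r : ℕ} (hr : (r:ℤ) = e0*q - e0) (h : ¬ q ∣ e0) : ¬ q ∣ r := by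
  intro hd
  apply h
  have h1 : (q:ℤ) ∣ (r:ℤ) := Int.natCast_dvd_natCast.mpr hd
  have h2 : (e0:ℤ) = e0*q - r := by rw [hr]; ring
  have h3 : (q:ℤ) ∣ (e0:ℤ) := h2 ▸ dvd_sub ⟨(e0:ℤ), by ring⟩ h1
  exact_mod_cast h3

lemma nd_nat {q u : ℕ} (hu : ¬ q ∣ u) (e e0 : ℕ) (he : e = e0 + u) :
    ¬ ((q:ℤ) ∣ (e:ℤ) - (e0:ℤ)) := by
  subst he
  push_cast
  rw [add_sub_cancel_left]
  exact fun hh => hu (Int.natCast_dvd_natCast.mp hh)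

lemma nd_nat' {q u : ℕ} (hu : ¬ q ∣ u) (e e0 : ℕ) (he : e0 = e + u) :
    ¬ ((q:ℤ) ∣ (e:ℤ) - (e0:ℤ)) := by
  subst he
  intro hh
  push_cast at hh
  apply hu
  rw [show (e:ℤ) - ((e:ℤ) + (u:ℤ)) = -(u:ℤ) from by ring, dvd_neg] at hh
  exact Int.natCast_dvd_natCast.mp hh

lemma core (q m s : ℕ) (hq : 7 ≤ q) (hm : 0 < m)
    (a c7 c6 c5 c4 c3 c2 c1 c0 d : ℂ) (hc1 : c1 ≠ 0) (hc2 : c2 ≠ 0)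
    (hvan : ∀ x : ℂ, (cyclotomic m ℂ).eval (x ^ q) = 0 →
      a*x^(2*s+7) + c7*x^(s+7) + c6*x^(s+6) + c5*x^(s+5) + c4*x^(s+4) + c3*x^(s+3)
        + c2*x^(s+2) + c1*x^(s+1) + c0*x^s + d = 0) : False := by
  have hq0 : q ≠ 0 := by omega
  have hmq : m * q ≠ 0 := Nat.mul_ne_zero hm.ne' hq0
  obtain ⟨ζ, hζ⟩ : ∃ ζ : ℂ, IsPrimitiveRoot ζ (m*q) :=
    ⟨_, Complex.isPrimitiveRoot_exp _ hmq⟩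
  have hζ0 : ζ ≠ 0 := hζ.ne_zero hmq
  have hμ : IsPrimitiveRoot (ζ^m) q := hζ.pow (Nat.pos_of_ne_zero hmq) rfl
  set μ : ℂ := ζ ^ m with hμdef
  have hcm : (cyclotomic m ℂ).eval (ζ^q) = 0 := by
    have : IsPrimitiveRoot (ζ^q) m := hζ.pow (Nat.pos_of_ne_zero hmq) (mul_comm m q)
    exact this.isRoot_cyclotomic hm
  have hvank : ∀ k : ℕ, a*(ζ*μ^k)^(2*s+7) + c7*(ζ*μ^k)^(s+7) + c6*(ζ*μ^k)^(s+6)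
      + c5*(ζ*μ^k)^(s+5) + c4*(ζ*μ^k)^(s+4) + c3*(ζ*μ^k)^(s+3) + c2*(ζ*μ^k)^(s+2)
      + c1*(ζ*μ^k)^(s+1) + c0*(ζ*μ^k)^s + d = 0 := by
    intro k
    apply hvan
    have h1 : (ζ*μ^k)^q = ζ^q := by
      rw [mul_pow, ← pow_mul, mul_comm k q, pow_mul, hμ.pow_eq_one, one_pow, mul_one]
    rw [h1]
    exact hcm
  have hqC : (q : ℂ) ≠ 0 := Nat.cast_ne_zero.mpr hq0
  have hsmall : ∀ u : ℕ, 0 < u → u < q → ¬ q ∣ u := by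
    intro u h1 h2 hd
    have := Nat.le_of_dvd h1 hd
    omega
  by_cases hA : q ∣ s + 1 ∨ q ∣ s + 6
  · -- use e0 = s+2, kill coefficient c2
    have h02 : ¬ q ∣ s + 2 := by
      intro h'
      rcases hA with h | h
      · have hd := Nat.dvd_sub h' h
        rw [show s+2-(s+1) = 1 from by omega] at hd
        exact hsmall 1 (by omega) (by omega) hd
      · have hd := Nat.dvd_sub h h'
        rw [show s+6-(s+2) = 4 from by omega] at hd
        exact hsmall 4 (by omega) (by omega) hd
    have h05 : ¬ q ∣ s + 5 := by
      intro h'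
      rcases hA with h | h
      · have hd := Nat.dvd_sub h' h
        rw [show s+5-(s+1) = 4 from by omega] at hd
        exact hsmall 4 (by omega) (by omega) hd
      · have hd := Nat.dvd_sub h h'
        rw [show s+6-(s+5) = 1 from by omega] at hd
        exact hsmall 1 (by omega) (by omega) hd
    have hr : (((s+2)*(q-1) : ℕ) : ℤ) = ((s+2 : ℕ) : ℤ) * q - ((s+2 : ℕ) : ℤ) := by
      exact cast_mul_sub_one _ _ (by omega)
    have key := fourierAux q s ((s+2)*(q-1)) μ ζ hμ a c7 c6 c5 c4 c3 c2 c1 c0 d hvank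
    have hle : s+2 ≤ (s+2)*q := Nat.le_mul_of_pos_right _ (by omega)
    have hpos : q ∣ s+2+(s+2)*(q-1) :=
      ⟨s+2, by rw [nat_mul_sub_one _ _ (by omega : 1 ≤ q), Nat.add_sub_cancel' hle, mul_comm]⟩
    rw [if_pos hpos,
      if_neg (not_dvd_shift hr (nd_nat h05 (2*s+7) (s+2) (by ring))),
      if_neg (not_dvd_shift hr (nd_nat (hsmall 5 (by omega) (by omega)) (s+7) (s+2) (by ring))),
      if_neg (not_dvd_shift hr (nd_nat (hsmall 4 (by omega) (by omega)) (s+6) (s+2) (by ring))),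
      if_neg (not_dvd_shift hr (nd_nat (hsmall 3 (by omega) (by omega)) (s+5) (s+2) (by ring))),
      if_neg (not_dvd_shift hr (nd_nat (hsmall 2 (by omega) (by omega)) (s+4) (s+2) (by ring))),
      if_neg (not_dvd_shift hr (nd_nat (hsmall 1 (by omega) (by omega)) (s+3) (s+2) (by ring))),
      if_neg (not_dvd_shift hr (nd_nat' (hsmall 1 (by omega) (by omega)) (s+1) (s+2) (by ring))),
      if_neg (not_dvd_shift hr (nd_nat' (hsmall 2 (by omega) (by omega)) s (s+2) (by ring))),
      if_neg (not_dvd_shift0 hr h02)] at key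
    have hne := mul_ne_zero (mul_ne_zero hc2 (pow_ne_zero (s+2) hζ0)) hqC
    apply hne
    linear_combination key
  · -- use e0 = s+1, kill coefficient c1
    push_neg at hA
    obtain ⟨h01, h06⟩ := hA
    have hr : (((s+1)*(q-1) : ℕ) : ℤ) = ((s+1 : ℕ) : ℤ) * q - ((s+1 : ℕ) : ℤ) := by
      exact cast_mul_sub_one _ _ (by omega)
    have key := fourierAux q s ((s+1)*(q-1)) μ ζ hμ a c7 c6 c5 c4 c3 c2 c1 c0 d hvank
    have hle : s+1 ≤ (s+1)*q := Nat.le_mul_of_pos_right _ (by omega)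
    have hpos : q ∣ s+1+(s+1)*(q-1) :=
      ⟨s+1, by rw [nat_mul_sub_one _ _ (by omega : 1 ≤ q), Nat.add_sub_cancel' hle, mul_comm]⟩
    rw [if_pos hpos,
      if_neg (not_dvd_shift hr (nd_nat h06 (2*s+7) (s+1) (by ring))),
      if_neg (not_dvd_shift hr (nd_nat (hsmall 6 (by omega) (by omega)) (s+7) (s+1) (by ring))),
      if_neg (not_dvd_shift hr (nd_nat (hsmall 5 (by omega) (by omega)) (s+6) (s+1) (by ring))),
      if_neg (not_dvd_shift hr (nd_nat (hsmall 4 (by omega) (by omega)) (s+5) (s+1) (by ring))),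
      if_neg (not_dvd_shift hr (nd_nat (hsmall 3 (by omega) (by omega)) (s+4) (s+1) (by ring))),
      if_neg (not_dvd_shift hr (nd_nat (hsmall 2 (by omega) (by omega)) (s+3) (s+1) (by ring))),
      if_neg (not_dvd_shift hr (nd_nat (hsmall 1 (by omega) (by omega)) (s+2) (s+1) (by ring))),
      if_neg (not_dvd_shift hr (nd_nat' (hsmall 1 (by omega) (by omega)) s (s+1) (by ring))),
      if_neg (not_dvd_shift0 hr h01)] at key
    have hne := mul_ne_zero (mul_ne_zero hc1 (pow_ne_zero (s+1) hζ0)) hqC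
    apply hne
    linear_combination key

lemma van_of_dvd (b q : ℕ) (f : Polynomial ℚ) (hdvd : cyclotomic b ℚ ∣ f)
    (hcyc : cyclotomic b ℚ = expand ℚ q (cyclotomic (b/q) ℚ)) (x : ℂ)
    (hx : (cyclotomic (b/q) ℂ).eval (x^q) = 0) : aeval x f = 0 := by
  obtain ⟨g, hg⟩ := hdvd
  rw [hg, map_mul]
  have h1 : (aeval x) (cyclotomic b ℚ) = 0 := by
    rw [aeval_def, ← eval_map, hcyc, map_expand, map_cyclotomic, expand_eval, hx]
  rw [h1, zero_mul]

lemma Upoly_aeval (s : ℕ) (x : ℂ) : aeval x (Upoly (s+4)) = 2*x^(2*s+7) + x^(s+7)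
    - x^(s+6) + x^(s+5) - 3*x^(s+4) + 3*x^(s+3) - x^(s+2) + x^(s+1) - x^s - 2 := by
  have e1 : 2*(s+4)-1 = 2*s+7 := by omega
  have e2 : s+4+3 = s+7 := by omega
  have e3 : s+4+2 = s+6 := by omega
  have e4 : s+4+1 = s+5 := by omega
  have e5 : s+4-1 = s+3 := by omega
  have e6 : s+4-2 = s+2 := by omega
  have e7 : s+4-3 = s+1 := by omega
  have e8 : s+4-4 = s := by omega
  simp only [Upoly, e1, e2, e3, e4, e5, e6, e7, e8, map_add, map_sub, map_mul, map_pow,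
    aeval_X, aeval_C]
  norm_num

lemma Wpoly_aeval (s : ℕ) (x : ℂ) : aeval x (Wpoly (s+4)) = 2*x^(2*s+7) - x^(s+7)
    + x^(s+6) - x^(s+5) - x^(s+4) + x^(s+3) + x^(s+2) - x^(s+1) + x^s - 2 := by
  have e1 : 2*(s+4)-1 = 2*s+7 := by omega
  have e2 : s+4+3 = s+7 := by omega
  have e3 : s+4+2 = s+6 := by omega
  have e4 : s+4+1 = s+5 := by omega
  have e5 : s+4-1 = s+3 := by omega
  have e6 : s+4-2 = s+2 := by omega
  have e7 : s+4-3 = s+1 := by omega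
  have e8 : s+4-4 = s := by omega
  simp only [Wpoly, e1, e2, e3, e4, e5, e6, e7, e8, map_add, map_sub, map_mul, map_pow,
    aeval_X, aeval_C]
  norm_num

lemma four_case (t b : ℕ) (ht : 4 ≤ t) (hte : Even t) (hb : 3 ≤ b) (h4 : 4 ∣ b)
    (hdvd : cyclotomic b ℚ ∣ Upoly t ∨ cyclotomic b ℚ ∣ Wpoly t) : b = 4 ∨ b = 8 := by
  obtain ⟨u, rfl⟩ : ∃ u, t = 2*u + 4 := by
    obtain ⟨v, hv⟩ := hte
    exact ⟨(t-4)/2, by omega⟩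
  have hb0 : b ≠ 0 := by omega
  have h2q : (2:ℕ) ∣ b / 2 := by omega
  have hcyc : cyclotomic b ℚ = expand ℚ 2 (cyclotomic (b/2) ℚ) := by
    rw [cyclotomic_expand_eq_cyclotomic Nat.prime_two h2q, Nat.div_mul_cancel (by omega : 2 ∣ b)]
  obtain ⟨ζ, hζ⟩ : ∃ ζ : ℂ, IsPrimitiveRoot ζ b := ⟨_, Complex.isPrimitiveRoot_exp _ hb0⟩
  have hζ0 : ζ ≠ 0 := hζ.ne_zero hb0
  have hm : 0 < b/2 := by omega
  have hcm : (cyclotomic (b/2) ℂ).eval (ζ^2) = 0 := by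
    have h := hζ.pow (by omega : 0 < b) (show b = 2*(b/2) by omega)
    exact h.isRoot_cyclotomic hm
  have hcm' : (cyclotomic (b/2) ℂ).eval ((-ζ)^2) = 0 := by
    rw [show (-ζ)^2 = ζ^2 from by ring]
    exact hcm
  have hst : 2*u+4 = (2*u)+4 := by omega
  have h8 : ζ^(8:ℕ) = 1 := by
    rcases hdvd with h | h
    · have hA := van_of_dvd b 2 _ h hcyc ζ hcm
      have hB := van_of_dvd b 2 _ h hcyc (-ζ) hcm'
      rw [hst, Upoly_aeval (2*u) ζ] at hA
      rw [hst, Upoly_aeval (2*u) (-ζ)] at hB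
      rw [Odd.neg_pow (⟨2*u+3, by ring⟩ : Odd (2*(2*u)+7)),
        Odd.neg_pow (⟨u+3, by ring⟩ : Odd (2*u+7)),
        Even.neg_pow (⟨u+3, by ring⟩ : Even (2*u+6)),
        Odd.neg_pow (⟨u+2, by ring⟩ : Odd (2*u+5)),
        Even.neg_pow (⟨u+2, by ring⟩ : Even (2*u+4)),
        Odd.neg_pow (⟨u+1, by ring⟩ : Odd (2*u+3)),
        Even.neg_pow (⟨u+1, by ring⟩ : Even (2*u+2)),
        Odd.neg_pow (⟨u, by ring⟩ : Odd (2*u+1)),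
        Even.neg_pow (⟨u, by ring⟩ : Even (2*u))] at hB
      have key : ζ^(4*u+1) * ((ζ^2+1)^4*(ζ^4+1)) = 0 := by
        linear_combination (-(ζ^(2*u+1)*(ζ^6+ζ^4+3*ζ^2+1))/2 - 1) * hA
          + (-(ζ^(2*u+1)*(ζ^6+ζ^4+3*ζ^2+1))/2 + 1) * hB
      rcases mul_eq_zero.mp key with h' | h'
      · exact absurd h' (pow_ne_zero _ hζ0)
      rcases mul_eq_zero.mp h' with h'' | h''
      · have h2 : ζ^2 + 1 = 0 := (pow_eq_zero_iff (by norm_num : (4:ℕ) ≠ 0)).mp h''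
        linear_combination (ζ^6 - ζ^4 + ζ^2 - 1) * h2
      · linear_combination (ζ^4 - 1) * h''
    · have hA := van_of_dvd b 2 _ h hcyc ζ hcm
      have hB := van_of_dvd b 2 _ h hcyc (-ζ) hcm'
      rw [hst, Wpoly_aeval (2*u) ζ] at hA
      rw [hst, Wpoly_aeval (2*u) (-ζ)] at hB
      rw [Odd.neg_pow (⟨2*u+3, by ring⟩ : Odd (2*(2*u)+7)),
        Odd.neg_pow (⟨u+3, by ring⟩ : Odd (2*u+7)),
        Even.neg_pow (⟨u+3, by ring⟩ : Even (2*u+6)),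
        Odd.neg_pow (⟨u+2, by ring⟩ : Odd (2*u+5)),
        Even.neg_pow (⟨u+2, by ring⟩ : Even (2*u+4)),
        Odd.neg_pow (⟨u+1, by ring⟩ : Odd (2*u+3)),
        Even.neg_pow (⟨u+1, by ring⟩ : Even (2*u+2)),
        Odd.neg_pow (⟨u, by ring⟩ : Odd (2*u+1)),
        Even.neg_pow (⟨u, by ring⟩ : Even (2*u))] at hB
      have key : ζ^(4*u+1) * ((ζ^4-1)*(ζ^8-1)) = 0 := by
        linear_combination ((ζ^(2*u+1)*(ζ^6+ζ^4-ζ^2+1))/2 - 1) * hA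
          + ((ζ^(2*u+1)*(ζ^6+ζ^4-ζ^2+1))/2 + 1) * hB
      rcases mul_eq_zero.mp key with h' | h'
      · exact absurd h' (pow_ne_zero _ hζ0)
      rcases mul_eq_zero.mp h' with h'' | h''
      · linear_combination (ζ^4 + 1) * h''
      · linear_combination h''
  have hdb : b ∣ 8 := hζ.dvd_of_pow_eq_one 8 h8
  have hb8 : b ≤ 8 := Nat.le_of_dvd (by norm_num) hdb
  interval_cases b <;> omega

lemma step (b q t : ℕ) (hq : 7 ≤ q) (hb : 0 < b) (hqb : q ∣ b) (ht : 4 ≤ t)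
    (hcyc : cyclotomic b ℚ = expand ℚ q (cyclotomic (b/q) ℚ))
    (hdvd : cyclotomic b ℚ ∣ Upoly t ∨ cyclotomic b ℚ ∣ Wpoly t) : False := by
  obtain ⟨s, rfl⟩ : ∃ s, t = s + 4 := ⟨t - 4, by omega⟩
  have hm : 0 < b / q := Nat.div_pos (Nat.le_of_dvd hb hqb) (by omega)
  rcases hdvd with h | h
  · apply core q (b/q) s hq hm 2 1 (-1) 1 (-3) 3 (-1) 1 (-1) (-2) one_ne_zero (by norm_num)
    intro x hx
    have h0 := van_of_dvd b q _ h hcyc x hx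
    rw [Upoly_aeval] at h0
    linear_combination h0
  · apply core q (b/q) s hq hm 2 (-1) 1 (-1) (-1) 1 1 (-1) 1 (-2) (by norm_num) one_ne_zero
    intro x hx
    have h0 := van_of_dvd b q _ h hcyc x hx
    rw [Wpoly_aeval] at h0
    linear_combination h0

/-- If `Φ_b` divides `U_t` or `W_t` for even `t ≥ 4` and `b ≥ 3`, then `p² ∤ b` for every prime
`p ≥ 7`, `5³ ∤ b`, `3³ ∤ b`, and if `2² ∣ b` then `b ∈ {4, 8}`. -/
theorem cyclotomic_dvd_UWpoly_constraints (t : ℕ) (ht : 4 ≤ t) (hte : Even t) (b : ℕ)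
    (hb : 3 ≤ b) (hdvd : cyclotomic b ℚ ∣ Upoly t ∨ cyclotomic b ℚ ∣ Wpoly t) :
    (∀ p : ℕ, p.Prime → 7 ≤ p → ¬ p ^ 2 ∣ b) ∧
      ¬ 5 ^ 3 ∣ b ∧ ¬ 3 ^ 3 ∣ b ∧ (2 ^ 2 ∣ b → b = 4 ∨ b = 8) := by
  refine ⟨?_, ?_, ?_, ?_⟩
  · intro p hp hp7 hsq
    obtain ⟨c, rfl⟩ := hsq
    have hbp : p^2*c/p = p*c := by
      rw [pow_two, mul_assoc, Nat.mul_div_cancel_left _ hp.pos]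
    have hcyc : cyclotomic (p^2*c) ℚ = expand ℚ p (cyclotomic (p^2*c/p) ℚ) := by
      rw [hbp, cyclotomic_expand_eq_cyclotomic hp (dvd_mul_right p c)]
      congr 1
      ring
    exact step (p^2*c) p t hp7 (by omega) ⟨p*c, by ring⟩ ht hcyc hdvd
  · intro h
    obtain ⟨c, rfl⟩ := h
    have hdiv : (5^3*c)/25 = 5*c := by omega
    have hcyc : cyclotomic (5^3*c) ℚ = expand ℚ 25 (cyclotomic ((5^3*c)/25) ℚ) := by
      rw [hdiv]
      have h1 : expand ℚ 5 (cyclotomic (5*c) ℚ) = cyclotomic (25*c) ℚ := by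
        rw [cyclotomic_expand_eq_cyclotomic (by norm_num) (dvd_mul_right 5 c)]
        congr 1
        ring
      have h2 : expand ℚ 5 (cyclotomic (25*c) ℚ) = cyclotomic (5^3*c) ℚ := by
        rw [cyclotomic_expand_eq_cyclotomic (by norm_num) (⟨5*c, by ring⟩ : (5:ℕ) ∣ 25*c)]
        congr 1
        ring
      rw [← h2, ← h1, expand_expand]
    exact step (5^3*c) 25 t (by norm_num) (by omega) ⟨5*c, by ring⟩ ht hcyc hdvd
  · intro h
    obtain ⟨c, rfl⟩ := h
    have hdiv : (3^3*c)/9 = 3*c := by omega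
    have hcyc : cyclotomic (3^3*c) ℚ = expand ℚ 9 (cyclotomic ((3^3*c)/9) ℚ) := by
      rw [hdiv]
      have h1 : expand ℚ 3 (cyclotomic (3*c) ℚ) = cyclotomic (9*c) ℚ := by
        rw [cyclotomic_expand_eq_cyclotomic (by norm_num) (dvd_mul_right 3 c)]
        congr 1
        ring
      have h2 : expand ℚ 3 (cyclotomic (9*c) ℚ) = cyclotomic (3^3*c) ℚ := by
        rw [cyclotomic_expand_eq_cyclotomic (by norm_num) (⟨3*c, by ring⟩ : (3:ℕ) ∣ 9*c)]
        congr 1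
        ring
      rw [← h2, ← h1, expand_expand]
    exact step (3^3*c) 9 t (by norm_num) (by omega) ⟨3*c, by ring⟩ ht hcyc hdvd
  · intro h4
    exact four_case t b ht hte hb (by omega) hdvd
end
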